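/- arXiv:0707.0536 — 7 statements merged into one kernel-verified Lean document; each statement's English description precedes it below -/
import Mathlib

section
/- Let g : [0,1] → (0,∞) be a non-increasing function, and let U be a random variable whose distribution is stochastically lower bounded by the uniform distribution on [0,1], i.e. P(U ≤ u) ≤ u for all u ∈ [0,1]. Then for any constant c > 0, E[ 1{U ≤ c·g(U)} / g(U) ] ≤ c. -/
open MeasureTheory

/-- Lemma (Blanchard–Roquain): if `g : [0,1] → (0,∞)` is non-increasing and `U` is
stochastically lower bounded by the uniform distribution on `[0,1]`, then
`E[ 1{U ≤ c g(U)} / g(U) ] ≤ c` for any `c > 0`. -/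
theorem stmt0 {Ω : Type*} [MeasurableSpace Ω] (μ : Measure Ω) [IsProbabilityMeasure μ]
    (g : ℝ → ℝ) (hg_pos : ∀ x ∈ Set.Icc (0 : ℝ) 1, 0 < g x)
    (hg_anti : AntitoneOn g (Set.Icc (0 : ℝ) 1))
    (U : Ω → ℝ) (hU : Measurable U) (hUrange : ∀ ω, U ω ∈ Set.Icc (0 : ℝ) 1)
    (hunif : ∀ u ∈ Set.Icc (0 : ℝ) 1, μ {ω | U ω ≤ u} ≤ ENNReal.ofReal u)
    (c : ℝ) (hc : 0 < c) :
    ∫⁻ ω, ENNReal.ofReal ((if U ω ≤ c * g (U ω) then (1 : ℝ) else 0) / g (U ω)) ∂μ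
      ≤ ENNReal.ofReal c := by
  set A : Set ℝ := {u | u ∈ Set.Icc (0 : ℝ) 1 ∧ u ≤ c * g u} with hA
  have h0A : (0 : ℝ) ∈ A :=
    ⟨⟨le_refl 0, zero_le_one⟩, mul_nonneg hc.le (hg_pos 0 ⟨le_refl 0, zero_le_one⟩).le⟩
  have hne : A.Nonempty := ⟨0, h0A⟩
  have hbdd : BddAbove A := ⟨1, fun u hu => hu.1.2⟩
  set s : ℝ := sSup A with hs
  have hs0 : 0 ≤ s := le_csSup hbdd h0A
  have hs1 : s ≤ 1 := csSup_le hne (fun u hu => hu.1.2)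
  have hmemA : ∀ ω, U ω ≤ c * g (U ω) → U ω ∈ A := fun ω h => ⟨hUrange ω, h⟩
  have key : ∀ u ∈ A, s ≤ c * g u := by
    intro u hu
    apply csSup_le hne
    intro v hv
    rcases le_total v u with h | h
    · exact h.trans hu.2
    · exact hv.2.trans (by
        have := hg_anti hu.1 hv.1 h
        nlinarith)
  rcases eq_or_lt_of_le hs0 with hs0' | hs0'
  · -- s = 0 : the event is a null set
    have hnull : μ {ω | U ω ≤ (0 : ℝ)} = 0 := by
      have := hunif 0 ⟨le_refl 0, zero_le_one⟩
      simpa using this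
    calc ∫⁻ ω, ENNReal.ofReal ((if U ω ≤ c * g (U ω) then (1 : ℝ) else 0) / g (U ω)) ∂μ
        ≤ ∫⁻ ω, Set.indicator {ω' | U ω' ≤ (0 : ℝ)} (fun _ => (⊤ : ENNReal)) ω ∂μ := by
          apply lintegral_mono
          intro ω
          by_cases h : U ω ≤ c * g (U ω)
          · have hU0 : U ω ≤ 0 := by
              have h1 : U ω ≤ s := le_csSup hbdd (hmemA ω h)
              linarith
            rw [Set.indicator_of_mem (by exact hU0)]
            exact le_top
          · simp [h]
      _ = ⊤ * μ {ω | U ω ≤ (0 : ℝ)} := by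
          rw [lintegral_indicator_const (show MeasurableSet {ω' | U ω' ≤ (0:ℝ)} from hU measurableSet_Iic)]
      _ = 0 := by rw [hnull, mul_zero]
      _ ≤ ENNReal.ofReal c := zero_le
  · -- s > 0
    calc ∫⁻ ω, ENNReal.ofReal ((if U ω ≤ c * g (U ω) then (1 : ℝ) else 0) / g (U ω)) ∂μ
        ≤ ∫⁻ ω, Set.indicator {ω' | U ω' ≤ s} (fun _ => ENNReal.ofReal (c / s)) ω ∂μ := by
          apply lintegral_mono
          intro ω
          by_cases h : U ω ≤ c * g (U ω)
          · have hmem : U ω ∈ A := hmemA ω h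
            have hUs : U ω ≤ s := le_csSup hbdd hmem
            rw [Set.indicator_of_mem (by exact hUs)]
            have hgpos : 0 < g (U ω) := hg_pos _ (hUrange ω)
            have : (1 : ℝ) / g (U ω) ≤ c / s := by
              rw [div_le_div_iff₀ hgpos hs0']
              nlinarith [key _ hmem]
            simp only [if_pos h]
            exact ENNReal.ofReal_le_ofReal this
          · simp [h]
      _ = ENNReal.ofReal (c / s) * μ {ω | U ω ≤ s} := by
          rw [lintegral_indicator_const (show MeasurableSet {ω' | U ω' ≤ s} from hU measurableSet_Iic)]
      _ ≤ ENNReal.ofReal (c / s) * ENNReal.ofReal s :=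
          mul_le_mul_right (hunif s ⟨hs0, hs1⟩) _
      _ = ENNReal.ofReal (c / s * s) := (ENNReal.ofReal_mul (by positivity)).symm
      _ = ENNReal.ofReal c := by rw [div_mul_cancel₀ _ hs0'.ne']
end

section
/- Let U, V be nonnegative real random variables such that: (1) P(U ≤ u) ≤ u for all u ∈ [0,1]; (2) for all v ≥ 0 and all 0 ≤ u ≤ u', P(V < v | U ≤ u) ≤ P(V < v | U ≤ u'). Then for any constant c > 0, E[ 1{U ≤ c·V} / V ] ≤ c (where the integrand is interpreted as 0 when V = 0 and U > 0; note U ≤ c·V with U stochastically uniform forces the ratio to be integrable over configurations considered). -/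
open MeasureTheory
open scoped ENNReal

lemma tele_key (m : ℤ → ℝ≥0∞) (hmono : Monotone m) (a : ℤ) :
    ∀ n : ℤ, a - 1 ≤ n →
      (∑ k ∈ Finset.Icc a n, (m (k + 1) - m k)) + m a = m (n + 1) := by
  intro n hn
  refine Int.le_induction (m := a - 1)
    (motive := fun n _ => (∑ k ∈ Finset.Icc a n, (m (k + 1) - m k)) + m a = m (n + 1)) ?_ ?_ n hn
  · have : Finset.Icc a (a - 1) = ∅ := Finset.Icc_eq_empty (by omega)
    simp [this]
  · intro n hn ih
    have hins : Finset.Icc a (n + 1) = insert (n + 1) (Finset.Icc a n) := by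
      ext x; simp only [Finset.mem_Icc, Finset.mem_insert]; omega
    rw [hins, Finset.sum_insert (by simp [Finset.mem_Icc]), add_assoc, ih,
      tsub_add_cancel_of_le (hmono (by omega))]

lemma tele_sum_le_one (m : ℤ → ℝ≥0∞) (hmono : Monotone m) (hle : ∀ k, m k ≤ 1) :
    (∑' k : ℤ, (m (k + 1) - m k)) ≤ 1 := by
  rw [ENNReal.tsum_eq_iSup_sum]
  refine iSup_le fun s => ?_
  rcases s.eq_empty_or_nonempty with rfl | hs
  · simp
  have hsub : s ⊆ Finset.Icc (s.min' hs) (s.max' hs) := fun x hx =>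
    Finset.mem_Icc.2 ⟨s.min'_le x hx, s.le_max' x hx⟩
  calc (∑ k ∈ s, (m (k + 1) - m k))
      ≤ ∑ k ∈ Finset.Icc (s.min' hs) (s.max' hs), (m (k + 1) - m k) :=
        Finset.sum_le_sum_of_subset hsub
    _ ≤ (∑ k ∈ Finset.Icc (s.min' hs) (s.max' hs), (m (k + 1) - m k)) + m (s.min' hs) :=
        le_self_add
    _ = m (s.max' hs + 1) := tele_key m hmono _ _
        (by have := s.min'_le _ (s.max'_mem hs); omega)
    _ ≤ 1 := hle _

lemma aux_gamma {Ω : Type*} [MeasurableSpace Ω] (μ : Measure Ω) [IsProbabilityMeasure μ]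
    (U V : Ω → ℝ) (hU : Measurable U) (hV : Measurable V)
    (hUnn : ∀ ω, 0 ≤ U ω) (hVnn : ∀ ω, 0 ≤ V ω)
    (hunif : ∀ u ∈ Set.Icc (0 : ℝ) 1, μ {ω | U ω ≤ u} ≤ ENNReal.ofReal u)
    (hcond : ∀ v : ℝ, 0 ≤ v → ∀ u u' : ℝ, 0 ≤ u → u ≤ u' →
      μ {ω | V ω < v ∧ U ω ≤ u} * μ {ω | U ω ≤ u'}
        ≤ μ {ω | V ω < v ∧ U ω ≤ u'} * μ {ω | U ω ≤ u})
    (c : ℝ) (hc : 0 < c) (γ : ℝ) (hγ : 1 < γ) :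
    ∫⁻ ω, ENNReal.ofReal ((if U ω ≤ c * V ω then (1 : ℝ) else 0) / V ω) ∂μ
      ≤ ENNReal.ofReal (c * γ) := by
  have hγ0 : (0 : ℝ) < γ := by linarith
  -- notation
  set F : ℤ → ℝ≥0∞ := fun k => μ {ω | U ω ≤ c * γ ^ k} with hF
  set G : ℤ → ℝ≥0∞ := fun k => μ {ω | V ω < γ ^ k ∧ U ω ≤ c * γ ^ k} with hG
  set m : ℤ → ℝ≥0∞ := fun k => G k / F k with hm
  set E : ℤ → Set Ω := fun k =>
    {ω | U ω ≤ c * V ω ∧ γ ^ k ≤ V ω ∧ V ω < γ ^ (k + 1)} with hE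
  have hzp : ∀ k : ℤ, (0 : ℝ) < γ ^ k := fun k => zpow_pos hγ0 k
  have hEmeas : ∀ k, MeasurableSet (E k) := by
    intro k
    exact (measurableSet_le hU (hV.const_mul c)).inter
      ((measurableSet_le measurable_const hV).inter (measurableSet_lt hV measurable_const))
  have hFfin : ∀ k, F k ≠ ⊤ := fun k => (measure_ne_top μ _)
  have hGF : ∀ k, G k ≤ F k := fun k => measure_mono (fun ω hω => hω.2)
  have hFmono : ∀ k, F k ≤ F (k + 1) := by
    intro k
    refine measure_mono (fun ω hω => ?_)
    have h5 : (0:ℝ) ≤ c * γ ^ k * (γ - 1) :=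
      mul_nonneg (mul_pos hc (hzp k)).le (by linarith)
    have : c * γ ^ k ≤ c * γ ^ (k + 1) := by
      rw [zpow_add_one₀ (ne_of_gt hγ0)]
      nlinarith [h5]
    exact le_trans hω this
  -- the cross inequality from hcond
  have hcross : ∀ k : ℤ, G k * F (k + 1) ≤
      μ {ω | V ω < γ ^ k ∧ U ω ≤ c * γ ^ (k + 1)} * F k := by
    intro k
    exact hcond (γ ^ k) (le_of_lt (hzp k)) (c * γ ^ k) (c * γ ^ (k + 1))
      (by positivity)
      (by
        have h5 : (0:ℝ) ≤ c * γ ^ k * (γ - 1) :=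
          mul_nonneg (mul_pos hc (hzp k)).le (by linarith)
        rw [zpow_add_one₀ (ne_of_gt hγ0)]; nlinarith [h5])
  -- F(k+1) * m k ≤ μ (B k)
  have hFm_le : ∀ k : ℤ, F (k + 1) * m k ≤ μ {ω | V ω < γ ^ k ∧ U ω ≤ c * γ ^ (k + 1)} := by
    intro k
    rcases eq_or_ne (F k) 0 with h0 | h0
    · have : G k = 0 := le_antisymm (h0 ▸ hGF k) zero_le
      simp [hm, this, h0]
    · have heq : F (k + 1) * m k = (G k * F (k + 1)) * (F k)⁻¹ := by
        show F (k + 1) * (G k / F k) = _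
        simp only [div_eq_mul_inv]; ring
      rw [heq]
      calc (G k * F (k + 1)) * (F k)⁻¹
          ≤ (μ {ω | V ω < γ ^ k ∧ U ω ≤ c * γ ^ (k + 1)} * F k) * (F k)⁻¹ :=
            mul_le_mul_left (hcross k) _
        _ = μ {ω | V ω < γ ^ k ∧ U ω ≤ c * γ ^ (k + 1)} * (F k * (F k)⁻¹) := by ring
        _ = μ {ω | V ω < γ ^ k ∧ U ω ≤ c * γ ^ (k + 1)} := by
            rw [ENNReal.mul_inv_cancel h0 (hFfin k), mul_one]
  -- G k = F k * m k  (≤ direction needed)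
  have hGle : ∀ k : ℤ, G k ≤ F k * m k := by
    intro k
    rcases eq_or_ne (F k) 0 with h0 | h0
    · have : G k = 0 := le_antisymm (h0 ▸ hGF k) zero_le
      simp [this]
    · show G k ≤ F k * (G k / F k)
      rw [div_eq_mul_inv, ← mul_assoc, mul_comm (F k) (G k), mul_assoc,
        ENNReal.mul_inv_cancel h0 (hFfin k), mul_one]
  -- monotonicity of m
  have hmmono : Monotone m := by
    have step : ∀ k : ℤ, m k ≤ m (k + 1) := by
      intro k
      rcases eq_or_ne (F k) 0 with h0 | h0
      · have : G k = 0 := le_antisymm (h0 ▸ hGF k) zero_le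
        simp [hm, this, h0]
      · have hF1 : F (k + 1) ≠ 0 := fun h =>
          h0 (le_antisymm (h ▸ hFmono k) zero_le)
        show G k / F k ≤ G (k + 1) / F (k + 1)
        rw [ENNReal.le_div_iff_mul_le (Or.inl hF1) (Or.inl (hFfin (k + 1)))]
        calc G k / F k * F (k + 1) = F (k + 1) * (G k / F k) := mul_comm _ _
          _ ≤ μ {ω | V ω < γ ^ k ∧ U ω ≤ c * γ ^ (k + 1)} := hFm_le k
          _ ≤ G (k + 1) := by
              refine measure_mono (fun ω hω => ?_)
              refine ⟨lt_of_lt_of_le hω.1 ?_, hω.2⟩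
              have := hzp k
              rw [zpow_add_one₀ (ne_of_gt hγ0)]
              nlinarith
    exact monotone_int_of_le_succ step
  have hmle1 : ∀ k, m k ≤ 1 := by
    intro k
    rcases eq_or_ne (F k) 0 with h0 | h0
    · have : G k = 0 := le_antisymm (h0 ▸ hGF k) zero_le
      simp [hm, this, h0]
    · show G k / F k ≤ 1
      rw [ENNReal.div_le_iff_le_mul (Or.inl h0) (Or.inl (hFfin k)), one_mul]
      exact hGF k
  -- μ (E k) ≤ F (k+1) * (m (k+1) - m k)
  have hEbound : ∀ k : ℤ, μ (E k) ≤ F (k + 1) * (m (k + 1) - m k) := by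
    intro k
    have hdisj : Disjoint (E k) {ω | V ω < γ ^ k ∧ U ω ≤ c * γ ^ (k + 1)} := by
      refine Set.disjoint_left.2 fun ω hω hω' => ?_
      exact absurd hω'.1 (not_lt.2 hω.2.1)
    have hBmeas : MeasurableSet {ω | V ω < γ ^ k ∧ U ω ≤ c * γ ^ (k + 1)} :=
      (measurableSet_lt hV measurable_const).inter (measurableSet_le hU measurable_const)
    have hsubset : E k ∪ {ω | V ω < γ ^ k ∧ U ω ≤ c * γ ^ (k + 1)}
        ⊆ {ω | V ω < γ ^ (k + 1) ∧ U ω ≤ c * γ ^ (k + 1)} := by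
      rintro ω (hω | hω)
      · refine ⟨hω.2.2, le_trans hω.1 ?_⟩
        nlinarith [hω.2.2, hc.le]
      · refine ⟨lt_of_lt_of_le hω.1 ?_, hω.2⟩
        have := hzp k
        rw [zpow_add_one₀ (ne_of_gt hγ0)]
        nlinarith
    have hsum : μ (E k) + F (k + 1) * m k ≤ F (k + 1) * m (k + 1) := by
      calc μ (E k) + F (k + 1) * m k
          ≤ μ (E k) + μ {ω | V ω < γ ^ k ∧ U ω ≤ c * γ ^ (k + 1)} :=
            add_le_add_right (hFm_le k) _
        _ = μ (E k ∪ {ω | V ω < γ ^ k ∧ U ω ≤ c * γ ^ (k + 1)}) :=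
            (measure_union hdisj hBmeas).symm
        _ ≤ G (k + 1) := measure_mono hsubset
        _ ≤ F (k + 1) * m (k + 1) := hGle (k + 1)
    calc μ (E k) ≤ F (k + 1) * m (k + 1) - F (k + 1) * m k :=
          ENNReal.le_sub_of_add_le_right (by
            exact ENNReal.mul_ne_top (hFfin (k+1)) (lt_of_le_of_lt (hmle1 k) ENNReal.one_lt_top).ne) hsum
      _ ≤ F (k + 1) * (m (k + 1) - m k) := by
          rw [tsub_le_iff_right]
          calc F (k + 1) * m (k + 1) ≤ F (k + 1) * ((m (k + 1) - m k) + m k) :=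
                mul_le_mul_right le_tsub_add _
            _ = F (k + 1) * (m (k + 1) - m k) + F (k + 1) * m k := by rw [mul_add]
  -- weight bound
  have hwF : ∀ k : ℤ, ENNReal.ofReal ((γ ^ k)⁻¹) * F (k + 1) ≤ ENNReal.ofReal (c * γ) := by
    intro k
    rcases le_or_gt (c * γ ^ (k + 1)) 1 with h1 | h1
    · have hF1 : F (k + 1) ≤ ENNReal.ofReal (c * γ ^ (k + 1)) :=
        hunif _ ⟨by positivity, h1⟩
      calc ENNReal.ofReal ((γ ^ k)⁻¹) * F (k + 1)
          ≤ ENNReal.ofReal ((γ ^ k)⁻¹) * ENNReal.ofReal (c * γ ^ (k + 1)) :=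
            mul_le_mul_right hF1 _
        _ = ENNReal.ofReal ((γ ^ k)⁻¹ * (c * γ ^ (k + 1))) :=
            (ENNReal.ofReal_mul (by positivity)).symm
        _ = ENNReal.ofReal (c * γ) := by
            congr 1
            have hne : (γ : ℝ) ^ k ≠ 0 := ne_of_gt (hzp k)
            rw [zpow_add_one₀ (ne_of_gt hγ0)]
            field_simp
    · have hF1 : F (k + 1) ≤ 1 := prob_le_one
      calc ENNReal.ofReal ((γ ^ k)⁻¹) * F (k + 1)
          ≤ ENNReal.ofReal ((γ ^ k)⁻¹) * 1 := mul_le_mul_right hF1 _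
        _ = ENNReal.ofReal ((γ ^ k)⁻¹) := mul_one _
        _ ≤ ENNReal.ofReal (c * γ) := by
            refine ENNReal.ofReal_le_ofReal ?_
            have h2 : (1 : ℝ) < (c * γ) * γ ^ k := by
              rw [zpow_add_one₀ (ne_of_gt hγ0)] at h1
              nlinarith
            have h3 : (0 : ℝ) < γ ^ k := hzp k
            have h4 : ((γ : ℝ) ^ k)⁻¹ * γ ^ k = 1 := inv_mul_cancel₀ (ne_of_gt h3)
            nlinarith [inv_pos.2 h3]
  -- pointwise bound
  have hpt : ∀ ω, ENNReal.ofReal ((if U ω ≤ c * V ω then (1 : ℝ) else 0) / V ω)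
      ≤ ∑' k : ℤ, (E k).indicator (fun _ => ENNReal.ofReal ((γ ^ k)⁻¹)) ω := by
    intro ω
    by_cases hUV : U ω ≤ c * V ω
    · rcases eq_or_lt_of_le (hVnn ω) with hV0 | hV0
      · simp [← hV0]
      · obtain ⟨k, hk1, hk2⟩ := exists_mem_Ico_zpow hV0 hγ
        have hmem : ω ∈ E k := ⟨hUV, hk1, hk2⟩
        calc ENNReal.ofReal ((if U ω ≤ c * V ω then (1 : ℝ) else 0) / V ω)
            = ENNReal.ofReal (1 / V ω) := by rw [if_pos hUV]
          _ ≤ ENNReal.ofReal ((γ ^ k)⁻¹) := by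
              refine ENNReal.ofReal_le_ofReal ?_
              rw [one_div]
              exact inv_anti₀ (hzp k) hk1
          _ = (E k).indicator (fun _ => ENNReal.ofReal ((γ ^ k)⁻¹)) ω := by
              rw [Set.indicator_of_mem hmem]
          _ ≤ ∑' j : ℤ, (E j).indicator (fun _ => ENNReal.ofReal ((γ ^ j)⁻¹)) ω :=
              ENNReal.le_tsum k
    · simp [if_neg hUV]
  -- put it together
  calc ∫⁻ ω, ENNReal.ofReal ((if U ω ≤ c * V ω then (1 : ℝ) else 0) / V ω) ∂μ
      ≤ ∫⁻ ω, ∑' k : ℤ, (E k).indicator (fun _ => ENNReal.ofReal ((γ ^ k)⁻¹)) ω ∂μ :=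
        lintegral_mono hpt
    _ = ∑' k : ℤ, ∫⁻ ω, (E k).indicator (fun _ => ENNReal.ofReal ((γ ^ k)⁻¹)) ω ∂μ :=
        lintegral_tsum (fun k => (measurable_const.indicator (hEmeas k)).aemeasurable)
    _ = ∑' k : ℤ, ENNReal.ofReal ((γ ^ k)⁻¹) * μ (E k) := by
        refine tsum_congr fun k => ?_
        rw [lintegral_indicator (hEmeas k), setLIntegral_const]
    _ ≤ ∑' k : ℤ, ENNReal.ofReal (c * γ) * (m (k + 1) - m k) := by
        refine ENNReal.tsum_le_tsum fun k => ?_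
        calc ENNReal.ofReal ((γ ^ k)⁻¹) * μ (E k)
            ≤ ENNReal.ofReal ((γ ^ k)⁻¹) * (F (k + 1) * (m (k + 1) - m k)) :=
              mul_le_mul_right (hEbound k) _
          _ = (ENNReal.ofReal ((γ ^ k)⁻¹) * F (k + 1)) * (m (k + 1) - m k) := by
              rw [mul_assoc]
          _ ≤ ENNReal.ofReal (c * γ) * (m (k + 1) - m k) :=
              mul_le_mul_left (hwF k) _
    _ = ENNReal.ofReal (c * γ) * ∑' k : ℤ, (m (k + 1) - m k) := ENNReal.tsum_mul_left
    _ ≤ ENNReal.ofReal (c * γ) * 1 :=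
        mul_le_mul_right (tele_sum_le_one m hmmono hmle1) _
    _ = ENNReal.ofReal (c * γ) := mul_one _

/-- Lemma: if `U` is stochastically lower bounded by uniform and the conditional
distribution of `V` given `U ≤ u` is stochastically decreasing in `u` (stated in
cross-multiplied form to avoid divisions), then `E[ 1{U ≤ c V} / V ] ≤ c`
(with the convention that the integrand is `0` when `V = 0`, i.e. `x / 0 = 0`). -/
theorem stmt1 {Ω : Type*} [MeasurableSpace Ω] (μ : Measure Ω) [IsProbabilityMeasure μ]
    (U V : Ω → ℝ) (hU : Measurable U) (hV : Measurable V)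
    (hUnn : ∀ ω, 0 ≤ U ω) (hVnn : ∀ ω, 0 ≤ V ω)
    (hunif : ∀ u ∈ Set.Icc (0 : ℝ) 1, μ {ω | U ω ≤ u} ≤ ENNReal.ofReal u)
    (hcond : ∀ v : ℝ, 0 ≤ v → ∀ u u' : ℝ, 0 ≤ u → u ≤ u' →
      μ {ω | V ω < v ∧ U ω ≤ u} * μ {ω | U ω ≤ u'}
        ≤ μ {ω | V ω < v ∧ U ω ≤ u'} * μ {ω | U ω ≤ u})
    (c : ℝ) (hc : 0 < c) :
    ∫⁻ ω, ENNReal.ofReal ((if U ω ≤ c * V ω then (1 : ℝ) else 0) / V ω) ∂μ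
      ≤ ENNReal.ofReal c := by
  refine ENNReal.le_of_forall_pos_le_add fun ε hε _ => ?_
  have hεR : (0 : ℝ) < (ε : ℝ) := hε
  have hγ : 1 < 1 + (ε : ℝ) / c := by have := div_pos hεR hc; linarith
  have key := aux_gamma μ U V hU hV hUnn hVnn hunif hcond c hc (1 + (ε : ℝ) / c) hγ
  have heq : c * (1 + (ε : ℝ) / c) = c + (ε : ℝ) := by field_simp
  calc ∫⁻ ω, ENNReal.ofReal ((if U ω ≤ c * V ω then (1 : ℝ) else 0) / V ω) ∂μ
      ≤ ENNReal.ofReal (c * (1 + (ε : ℝ) / c)) := key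
    _ = ENNReal.ofReal c + ENNReal.ofReal (ε : ℝ) := by
        rw [heq, ENNReal.ofReal_add hc.le hεR.le]
    _ = ENNReal.ofReal c + (ε : ℝ≥0∞) := by rw [ENNReal.ofReal_coe_nnreal]
end

section
/- Suppose m ≥ 1 hypotheses are tested with p-values p₁,...,p_m that are independent, with the p-values of true null hypotheses stochastically lower bounded by the uniform distribution on [0,1]. Fix α, λ ∈ (0,1) and define the threshold collection Δ(i) = min((1−λ)·α·i/(m−i+1), λ) for 1 ≤ i ≤ m, with Δ(0)=0. Then any non-increasing self-consistent multiple testing procedure R with respect to Δ (in particular the step-up procedure with threshold collection Δ) satisfies FDR(R) ≤ α, where FDR(R) = E[ |R ∩ H₀|/|R| · 1{|R|>0} ] and H₀ is the set of true null hypotheses. -/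
open MeasureTheory ENNReal

noncomputable section

lemma br_meas_comp {m : ℕ} (R : (Fin m → ℝ) → Finset (Fin m))
    (hR : ∀ s, MeasurableSet {x : Fin m → ℝ | R x = s})
    (φ : Finset (Fin m) → (Fin m → ℝ) → ℝ≥0∞) (hφ : ∀ s, Measurable (φ s)) :
    Measurable (fun x => φ (R x) x) := by
  have hrw : (fun x => φ (R x) x)
      = fun x => ∑ s : Finset (Fin m), Set.indicator {x | R x = s} (φ s) x := by
    funext x
    rw [Finset.sum_eq_single (R x)]
    · rw [Set.indicator_of_mem (by simp : x ∈ {x' | R x' = R x})]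
    · intro s _ hs
      exact Set.indicator_of_notMem (by simpa using fun h => hs h.symm) _
    · simp
  rw [hrw]
  exact Finset.measurable_sum _ fun s _ => (hφ s).indicator (hR s)

lemma br_finner (ν : Measure ℝ) [IsProbabilityMeasure ν]
    (hν : ∀ t ∈ Set.Icc (0:ℝ) 1, ν (Set.Iic t) ≤ ENNReal.ofReal t)
    (f : ℝ → ℕ) (hf : Antitone f) (c : ℝ) (hc : 0 ≤ c) :
    ∫⁻ u, (if u ≤ c * f u ∧ 1 ≤ f u then ((f u : ℝ≥0∞))⁻¹ else 0) ∂ν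
      ≤ ENNReal.ofReal c := by
  set S : Set ℝ := {u | u ≤ c * f u ∧ 1 ≤ f u} with hS
  by_cases hne : S.Nonempty
  · have hSimne : (f '' S).Nonempty := hne.image f
    set k₀ : ℕ := sInf (f '' S) with hk₀
    obtain ⟨u₀, hu₀S, hu₀⟩ := Nat.sInf_mem hSimne
    rw [← hk₀] at hu₀
    have hu₀S' : u₀ ≤ c * f u₀ ∧ 1 ≤ f u₀ := hu₀S
    have hk₀1 : 1 ≤ k₀ := hu₀ ▸ hu₀S'.2
    have hk₀le : ∀ u ∈ S, k₀ ≤ f u := fun u hu => Nat.sInf_le ⟨u, hu, rfl⟩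
    have hSle : ∀ u ∈ S, u ≤ c * k₀ := by
      intro u hu
      rcases le_total u u₀ with h | h
      · refine h.trans (hu₀S'.1.trans ?_)
        rw [hu₀]
      · have h1 : f u ≤ k₀ := hu₀ ▸ hf h
        have h2 : f u = k₀ := le_antisymm h1 (hk₀le u hu)
        calc u ≤ c * f u := hu.1
        _ = c * k₀ := by rw [h2]
    have hbound : ∀ u, (if u ≤ c * f u ∧ 1 ≤ f u then ((f u : ℝ≥0∞))⁻¹ else 0)
        ≤ Set.indicator (Set.Iic (c * k₀)) (fun _ => ((k₀ : ℝ≥0∞))⁻¹) u := by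
      intro u
      by_cases hu : u ∈ S
      · rw [if_pos (show u ≤ c * f u ∧ 1 ≤ f u from hu),
          Set.indicator_of_mem (show u ∈ Set.Iic (c * (k₀:ℝ)) from hSle u hu)]
        exact ENNReal.inv_le_inv.mpr (by exact_mod_cast hk₀le u hu)
      · rw [if_neg (show ¬(u ≤ c * f u ∧ 1 ≤ f u) from hu)]; exact zero_le
    calc ∫⁻ u, (if u ≤ c * f u ∧ 1 ≤ f u then ((f u : ℝ≥0∞))⁻¹ else 0) ∂ν
        ≤ ∫⁻ u, Set.indicator (Set.Iic (c * k₀)) (fun _ => ((k₀ : ℝ≥0∞))⁻¹) u ∂ν :=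
          lintegral_mono hbound
      _ = ((k₀ : ℝ≥0∞))⁻¹ * ν (Set.Iic (c * k₀)) := by
          rw [lintegral_indicator measurableSet_Iic, setLIntegral_const, mul_comm]
      _ ≤ ENNReal.ofReal c := by
          have hk₀pos : (0:ℝ) < k₀ := by exact_mod_cast hk₀1
          rcases le_total (c * k₀) 1 with hle | hgt
          · have h1 : ν (Set.Iic (c * k₀)) ≤ ENNReal.ofReal (c * k₀) :=
              hν _ ⟨mul_nonneg hc hk₀pos.le, hle⟩
            calc ((k₀ : ℝ≥0∞))⁻¹ * ν (Set.Iic (c * k₀))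
                ≤ ((k₀ : ℝ≥0∞))⁻¹ * ENNReal.ofReal (c * k₀) := by gcongr
              _ = ENNReal.ofReal c := by
                  rw [ENNReal.ofReal_mul hc, ENNReal.ofReal_natCast, mul_comm,
                    mul_assoc, ENNReal.mul_inv_cancel
                      (by exact_mod_cast hk₀1.trans_lt' Nat.zero_lt_one |>.ne') (by simp),
                    mul_one]
          · have h1 : ν (Set.Iic (c * k₀)) ≤ 1 := prob_le_one
            calc ((k₀ : ℝ≥0∞))⁻¹ * ν (Set.Iic (c * k₀))
                ≤ ((k₀ : ℝ≥0∞))⁻¹ * 1 := by gcongr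
              _ = ENNReal.ofReal ((k₀:ℝ)⁻¹) := by
                  rw [mul_one, ← ENNReal.ofReal_natCast k₀, ← ENNReal.ofReal_inv_of_pos hk₀pos]
              _ ≤ ENNReal.ofReal c := by
                  apply ENNReal.ofReal_le_ofReal
                  rw [inv_le_iff_one_le_mul₀ hk₀pos]
                  linarith [hgt]
  · have h0 : ∀ u, (if u ≤ c * f u ∧ 1 ≤ f u then ((f u : ℝ≥0∞))⁻¹ else 0) = 0 := by
      intro u
      exact if_neg (fun h => hne ⟨u, h⟩)
    simp only [h0, lintegral_zero]
    exact zero_le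

lemma br_sc_meas {m : ℕ} (R : (Fin m → ℝ) → Finset (Fin m))
    (hR : ∀ s, MeasurableSet {x : Fin m → ℝ | R x = s}) (c : ℕ → ℝ) :
    MeasurableSet {x : Fin m → ℝ | ∀ h ∈ R x, x h ≤ c (R x).card} := by
  have hrw : {x : Fin m → ℝ | ∀ h ∈ R x, x h ≤ c (R x).card}
      = ⋃ s : Finset (Fin m), ({x | R x = s} ∩ ⋂ h ∈ s, {x | x h ≤ c s.card}) := by
    ext x
    simp only [Set.mem_setOf_eq, Set.mem_iUnion, Set.mem_inter_iff, Set.mem_iInter]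
    constructor
    · intro hx
      exact ⟨R x, rfl, fun h hh => hx h hh⟩
    · rintro ⟨s, rfl, h2⟩ h hh
      exact h2 h hh
  rw [hrw]
  exact MeasurableSet.iUnion fun s => (hR s).inter
    (MeasurableSet.biInter (Set.to_countable _)
      fun h _ => measurableSet_le (measurable_pi_apply h) measurable_const)

/-- number of p-values above `lam` within `s` -/
def brCount {m : ℕ} (s : Finset (Fin m)) (lam : ℝ) (x : Fin m → ℝ) : ℕ :=
  (s.filter (fun h' => lam < x h')).card

lemma brCount_meas {m : ℕ} (s : Finset (Fin m)) (lam : ℝ) :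
    Measurable (brCount s lam) := by
  classical
  have h : brCount s lam = fun x => ∑ h' ∈ s, if lam < x h' then 1 else 0 := by
    funext x
    rw [brCount, Finset.card_filter]
  rw [h]
  exact Finset.measurable_sum _ fun h' _ =>
    Measurable.ite (measurableSet_lt measurable_const (measurable_pi_apply h'))
      measurable_const measurable_const

lemma brCount_meas_real {m : ℕ} (s : Finset (Fin m)) (lam : ℝ) :
    Measurable (fun x => (brCount s lam x : ℝ)) :=
  measurable_from_top.comp (brCount_meas s lam)

def brF {m : ℕ} (R : (Fin m → ℝ) → Finset (Fin m)) (H₀ : Finset (Fin m))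
    (lam α : ℝ) (h : Fin m) (x : Fin m → ℝ) : ℝ≥0∞ :=
  if x h ≤ (1-lam)*α/((brCount (H₀.erase h) lam x : ℝ)+1) * ((R x).card:ℝ) ∧ 1 ≤ (R x).card
  then (((R x).card : ℝ≥0∞))⁻¹ else 0

lemma brF_meas {m : ℕ} (R : (Fin m → ℝ) → Finset (Fin m))
    (hR : ∀ s, MeasurableSet {x : Fin m → ℝ | R x = s})
    (H₀ : Finset (Fin m)) (lam α : ℝ) (h : Fin m) :
    Measurable (brF R H₀ lam α h) := by
  have key : ∀ s : Finset (Fin m), Measurable (fun x : Fin m → ℝ =>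
      (if x h ≤ (1-lam)*α/((brCount (H₀.erase h) lam x : ℝ)+1) * (s.card:ℝ) ∧ 1 ≤ s.card
       then ((s.card : ℝ≥0∞))⁻¹ else 0 : ℝ≥0∞)) := by
    intro s
    by_cases hcard : 1 ≤ s.card
    · simp only [hcard, and_true]
      exact Measurable.ite
        (measurableSet_le (measurable_pi_apply h)
          ((measurable_const.div ((brCount_meas_real _ lam).add_const 1)).mul_const _))
        measurable_const measurable_const
    · simp only [hcard, and_false, if_false]
      exact measurable_const
  exact br_meas_comp R hR
    (fun s x => if x h ≤ (1-lam)*α/((brCount (H₀.erase h) lam x : ℝ)+1) * (s.card:ℝ) ∧ 1 ≤ s.card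
       then ((s.card : ℝ≥0∞))⁻¹ else 0) key

def brK {m : ℕ} (H₀ : Finset (Fin m)) (lam : ℝ) (h : Fin m) (x : Fin m → ℝ) : ℝ≥0∞ :=
  if lam < x h then ((brCount H₀ lam x : ℝ≥0∞))⁻¹ else 0

lemma brK_meas {m : ℕ} (H₀ : Finset (Fin m)) (lam : ℝ) (h : Fin m) :
    Measurable (brK H₀ lam h) :=
  Measurable.ite (measurableSet_lt measurable_const (measurable_pi_apply h))
    ((measurable_from_top (f := fun k : ℕ => ((k : ℝ≥0∞))⁻¹)).comp (brCount_meas H₀ lam))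
    measurable_const

def brG {m : ℕ} (R : (Fin m → ℝ) → Finset (Fin m)) (H₀ : Finset (Fin m))
    (x : Fin m → ℝ) : ℝ≥0∞ :=
  ENNReal.ofReal ((((R x ∩ H₀).card):ℝ)/(((R x).card):ℝ) * (if 0 < (R x).card then 1 else 0))

lemma brG_meas {m : ℕ} (R : (Fin m → ℝ) → Finset (Fin m))
    (hR : ∀ s, MeasurableSet {x : Fin m → ℝ | R x = s}) (H₀ : Finset (Fin m)) :
    Measurable (brG R H₀) :=
  br_meas_comp R hR
    (fun s _ => ENNReal.ofReal (((s ∩ H₀).card:ℝ)/((s.card):ℝ) * (if 0 < s.card then 1 else 0)))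
    (fun _ => measurable_const)

lemma br_main {n : ℕ} (ν : Fin (n+1) → Measure ℝ) [∀ i, IsProbabilityMeasure (ν i)]
    (H₀ : Finset (Fin (n+1)))
    (hnull : ∀ h ∈ H₀, ∀ t ∈ Set.Icc (0:ℝ) 1, ν h (Set.Iic t) ≤ ENNReal.ofReal t)
    (α lam : ℝ) (hα : α ∈ Set.Ioo (0:ℝ) 1) (hlam : lam ∈ Set.Ioo (0:ℝ) 1)
    (R : (Fin (n+1) → ℝ) → Finset (Fin (n+1)))
    (hRmeas : ∀ s, MeasurableSet {x : Fin (n+1) → ℝ | R x = s})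
    (hsc : ∀ᵐ x ∂(Measure.pi ν), ∀ h ∈ R x,
      x h ≤ min ((1-lam)*α*((R x).card:ℝ)/(((n+1:ℕ):ℝ) - ((R x).card:ℝ) + 1)) lam)
    (hni : ∀ x y : Fin (n+1) → ℝ, x ≤ y → (R y).card ≤ (R x).card) :
    ∫⁻ x, brG R H₀ x ∂(Measure.pi ν) ≤ ENNReal.ofReal α := by
  classical
  set π := Measure.pi ν with hπdef
  -- Step 1: restrict to the set where self-consistency holds
  set N : Set (Fin (n+1) → ℝ) := {x | ¬ ∀ h ∈ R x,
    x h ≤ min ((1-lam)*α*((R x).card:ℝ)/(((n+1:ℕ):ℝ) - ((R x).card:ℝ) + 1)) lam} with hNdef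
  have step1 : ∫⁻ x, brG R H₀ x ∂π = ∫⁻ x, Set.indicator Nᶜ (brG R H₀) x ∂π := by
    apply lintegral_congr_ae
    filter_upwards [hsc] with x hx
    exact (Set.indicator_of_mem (show x ∈ Nᶜ from fun hmem => hmem hx) (brG R H₀)).symm
  -- Step 2: pointwise domination
  have step2 : ∀ x, Set.indicator Nᶜ (brG R H₀) x ≤ ∑ h ∈ H₀, brF R H₀ lam α h x := by
    intro x
    by_cases hx : x ∈ Nᶜ
    · rw [Set.indicator_of_mem hx]
      have hscx : ∀ h ∈ R x,
          x h ≤ min ((1-lam)*α*((R x).card:ℝ)/(((n+1:ℕ):ℝ) - ((R x).card:ℝ) + 1)) lam :=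
        not_not.mp hx
      by_cases hcard : 0 < (R x).card
      · have hGx : brG R H₀ x = ((R x ∩ H₀).card : ℝ≥0∞) * (((R x).card : ℝ≥0∞))⁻¹ := by
          rw [brG, if_pos hcard, mul_one,
            ENNReal.ofReal_div_of_pos (by exact_mod_cast hcard), ENNReal.ofReal_natCast,
            ENNReal.ofReal_natCast, div_eq_mul_inv]
        have hsum : ∑ h ∈ H₀, (if h ∈ R x then (((R x).card : ℝ≥0∞))⁻¹ else 0)
            = ((R x ∩ H₀).card : ℝ≥0∞) * (((R x).card : ℝ≥0∞))⁻¹ := by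
          rw [← Finset.sum_filter, Finset.sum_const, nsmul_eq_mul]
          have hfe : H₀.filter (fun h => h ∈ R x) = R x ∩ H₀ := by
            ext h
            simp [Finset.mem_inter, and_comm]
          rw [hfe]
        rw [hGx, ← hsum]
        apply Finset.sum_le_sum
        intro h hh
        by_cases hmem : h ∈ R x
        · rw [if_pos hmem]
          have hcond1 : 1 ≤ (R x).card := hcard
          have hle1 : x h ≤ (1-lam)*α*((R x).card:ℝ)/(((n+1:ℕ):ℝ) - ((R x).card:ℝ) + 1) :=
            (hscx h hmem).trans (min_le_left _ _)
          -- count bound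
          have hdisj : Disjoint ((H₀.erase h).filter (fun h' => lam < x h')) (R x) := by
            rw [Finset.disjoint_left]
            intro h' hh' hh'R
            have := (hscx h' hh'R).trans (min_le_right _ _)
            have := (Finset.mem_filter.mp hh').2
            linarith
          have hcount : brCount (H₀.erase h) lam x + (R x).card ≤ n + 1 := by
            rw [brCount, ← Finset.card_union_of_disjoint hdisj]
            calc _ ≤ Fintype.card (Fin (n+1)) := Finset.card_le_univ _
              _ = n + 1 := by simp
          have hden : ((brCount (H₀.erase h) lam x : ℝ) + 1)
              ≤ ((n+1:ℕ):ℝ) - ((R x).card:ℝ) + 1 := by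
            have : (brCount (H₀.erase h) lam x : ℝ) + ((R x).card:ℝ) ≤ ((n+1:ℕ):ℝ) := by
              exact_mod_cast hcount
            linarith
          have hnum : 0 ≤ (1-lam)*α*((R x).card:ℝ) :=
            mul_nonneg (mul_nonneg (by linarith [hlam.2]) hα.1.le) (Nat.cast_nonneg _)
          have hle2 : (1-lam)*α*((R x).card:ℝ)/(((n+1:ℕ):ℝ) - ((R x).card:ℝ) + 1)
              ≤ (1-lam)*α*((R x).card:ℝ)/((brCount (H₀.erase h) lam x : ℝ) + 1) :=
            div_le_div_of_nonneg_left hnum (by positivity) hden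
          have hcond2 : x h ≤ (1-lam)*α/((brCount (H₀.erase h) lam x : ℝ)+1) * ((R x).card:ℝ) := by
            calc x h ≤ _ := hle1
              _ ≤ (1-lam)*α*((R x).card:ℝ)/((brCount (H₀.erase h) lam x : ℝ) + 1) := hle2
              _ = (1-lam)*α/((brCount (H₀.erase h) lam x : ℝ)+1) * ((R x).card:ℝ) := by ring
          rw [brF, if_pos ⟨hcond2, hcond1⟩]
        · rw [if_neg hmem]
          exact zero_le
      · have : brG R H₀ x = 0 := by
          rw [brG, if_neg hcard, mul_zero, ENNReal.ofReal_zero]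
        rw [this]
        exact zero_le
    · rw [Set.indicator_of_notMem hx]
      exact zero_le
  -- Step 4: per-h bound
  have step4 : ∀ h ∈ H₀, ∫⁻ x, brF R H₀ lam α h x ∂π
      ≤ ENNReal.ofReal α * ∫⁻ x, brK H₀ lam h x ∂π := by
    intro h hh
    set e := MeasurableEquiv.piFinSuccAbove (fun _ : Fin (n+1) => ℝ) h with hedef
    set π' := Measure.pi (fun j => ν (h.succAbove j)) with hπ'def
    have MP : MeasurePreserving (⇑e) π ((ν h).prod π') :=
      measurePreserving_piFinSuccAbove ν h
    set ins : ℝ → (Fin n → ℝ) → (Fin (n+1) → ℝ) := fun u y => e.symm (u, y) with hinsdef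
    have ins_same : ∀ (u : ℝ) (y : Fin n → ℝ), ins u y h = u := fun u y =>
      Fin.insertNth_apply_same (α := fun _ : Fin (n+1) => ℝ) h u y
    have ins_succ : ∀ (u : ℝ) (y : Fin n → ℝ) (j : Fin n), ins u y (h.succAbove j) = y j :=
      fun u y j => Fin.insertNth_apply_succAbove (α := fun _ : Fin (n+1) => ℝ) h u y j
    -- the count D y of other-coordinate exceedances
    set D : (Fin n → ℝ) → ℕ := fun y => brCount (H₀.erase h) lam (ins 0 y) with hDdef
    have hins : ∀ (u : ℝ) (y : Fin n → ℝ) (h' : Fin (n+1)), h' ≠ h →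
        ins u y h' = ins 0 y h' := by
      intro u y h' hne
      obtain ⟨j, hj⟩ := Fin.exists_succAbove_eq hne
      rw [← hj, ins_succ, ins_succ]
    have hD : ∀ (u : ℝ) (y : Fin n → ℝ),
        brCount (H₀.erase h) lam (ins u y) = D y := by
      intro u y
      simp only [hDdef, brCount]
      congr 1
      apply Finset.filter_congr
      intro h' hh'
      rw [hins u y h' (Finset.ne_of_mem_erase hh')]
    have hDmeas : Measurable D := by
      rw [hDdef, hinsdef]
      exact (brCount_meas _ lam).comp
        (e.symm.measurable.comp (measurable_const.prodMk measurable_id))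
    set J := ∫⁻ y, (((D y + 1 : ℕ)) : ℝ≥0∞)⁻¹ ∂π' with hJdef
    have hJmeas : Measurable fun y => (((D y + 1 : ℕ)) : ℝ≥0∞)⁻¹ :=
      (measurable_from_top (f := fun k : ℕ => ((k : ℝ≥0∞))⁻¹)).comp (hDmeas.add_const 1)
    have h1lam : (0:ℝ) ≤ 1 - lam := by linarith [hlam.2]
    have hnn : (0:ℝ) ≤ (1-lam)*α := mul_nonneg h1lam hα.1.le
    -- F side
    have hFcomp : Measurable fun z : ℝ × (Fin n → ℝ) => brF R H₀ lam α h (e.symm z) :=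
      (brF_meas R hRmeas H₀ lam α h).comp e.symm.measurable
    have hIF : ∫⁻ x, brF R H₀ lam α h x ∂π
        = ∫⁻ z, brF R H₀ lam α h (e.symm z) ∂((ν h).prod π') := by
      rw [← MP.lintegral_comp hFcomp]
      exact lintegral_congr fun x => by rw [e.symm_apply_apply]
    have hinner : ∀ y : Fin n → ℝ, ∫⁻ u, brF R H₀ lam α h (e.symm (u, y)) ∂(ν h)
        ≤ ENNReal.ofReal ((1-lam)*α) * (((D y + 1 : ℕ)) : ℝ≥0∞)⁻¹ := by
      intro y
      set f : ℝ → ℕ := fun u => (R (ins u y)).card with hfdef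
      have hfanti : Antitone f := by
        intro u v huv
        apply hni
        intro j
        rcases eq_or_ne j h with rfl | hne
        · rw [ins_same, ins_same]
          exact huv
        · rw [hins u y j hne, hins v y j hne]
      set c : ℝ := (1-lam)*α/((D y : ℝ)+1) with hcdef
      have hc : 0 ≤ c := div_nonneg hnn (by positivity)
      have hsec : ∀ u : ℝ, brF R H₀ lam α h (e.symm (u, y))
          = if u ≤ c * f u ∧ 1 ≤ f u then ((f u : ℝ≥0∞))⁻¹ else 0 := by
        intro u
        show brF R H₀ lam α h (ins u y) = _
        rw [brF, hD u y, ins_same]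
      have hofc : ENNReal.ofReal c = ENNReal.ofReal ((1-lam)*α) * (((D y + 1 : ℕ)) : ℝ≥0∞)⁻¹ := by
        rw [hcdef, div_eq_mul_inv, ENNReal.ofReal_mul hnn,
          ENNReal.ofReal_inv_of_pos (by positivity)]
        congr 2
        rw [show ((D y : ℝ) + 1) = ((D y + 1 : ℕ) : ℝ) by push_cast; ring,
          ENNReal.ofReal_natCast]
      calc ∫⁻ u, brF R H₀ lam α h (e.symm (u, y)) ∂(ν h)
          = ∫⁻ u, (if u ≤ c * f u ∧ 1 ≤ f u then ((f u : ℝ≥0∞))⁻¹ else 0) ∂(ν h) :=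
            lintegral_congr hsec
        _ ≤ ENNReal.ofReal c := br_finner (ν h) (hnull h hh) f hfanti c hc
        _ = _ := hofc
    have hIF2 : ∫⁻ x, brF R H₀ lam α h x ∂π ≤ ENNReal.ofReal ((1-lam)*α) * J := by
      rw [hIF, lintegral_prod_symm _ hFcomp.aemeasurable]
      calc ∫⁻ y, ∫⁻ u, brF R H₀ lam α h (e.symm (u, y)) ∂(ν h) ∂π'
          ≤ ∫⁻ y, ENNReal.ofReal ((1-lam)*α) * (((D y + 1 : ℕ)) : ℝ≥0∞)⁻¹ ∂π' :=
            lintegral_mono hinner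
        _ = ENNReal.ofReal ((1-lam)*α) * J := lintegral_const_mul _ hJmeas
    -- K side
    have hq : ENNReal.ofReal (1-lam) ≤ ν h (Set.Ioi lam) := by
      have hIic : ν h (Set.Iic lam) ≤ ENNReal.ofReal lam :=
        hnull h hh lam ⟨hlam.1.le, hlam.2.le⟩
      have hcompl : ν h (Set.Ioi lam) = 1 - ν h (Set.Iic lam) := by
        rw [← Set.compl_Iic, prob_compl_eq_one_sub measurableSet_Iic]
      rw [hcompl]
      calc ENNReal.ofReal (1-lam) = 1 - ENNReal.ofReal lam := by
            rw [ENNReal.ofReal_sub _ hlam.1.le, ENNReal.ofReal_one]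
        _ ≤ 1 - ν h (Set.Iic lam) := tsub_le_tsub_left hIic 1
    have hKcomp : Measurable fun z : ℝ × (Fin n → ℝ) => brK H₀ lam h (e.symm z) :=
      (brK_meas H₀ lam h).comp e.symm.measurable
    have hcount1 : ∀ (u : ℝ) (y : Fin n → ℝ), lam < u →
        brCount H₀ lam (ins u y) = D y + 1 := by
      intro u y hu
      have hmemf : h ∈ H₀.filter (fun h' => lam < (ins u y) h') := by
        rw [Finset.mem_filter, ins_same]
        exact ⟨hh, hu⟩
      have h1 : brCount (H₀.erase h) lam (ins u y)
          = brCount H₀ lam (ins u y) - 1 := by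
        simp only [brCount]
        rw [Finset.filter_erase, Finset.card_erase_of_mem hmemf]
      have h2 : 1 ≤ brCount H₀ lam (ins u y) := by
        simp only [brCount]
        exact Finset.card_pos.mpr ⟨h, hmemf⟩
      have := hD u y
      omega
    have hKsec : ∀ z : ℝ × (Fin n → ℝ), brK H₀ lam h (e.symm z)
        = (Set.Ioi lam).indicator (1 : ℝ → ℝ≥0∞) z.1 * (((D z.2 + 1 : ℕ)) : ℝ≥0∞)⁻¹ := by
      rintro ⟨u, y⟩
      show brK H₀ lam h (ins u y) = _
      rw [brK, ins_same]
      by_cases hu : lam < u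
      · rw [if_pos hu, Set.indicator_of_mem (show u ∈ Set.Ioi lam from hu), Pi.one_apply, one_mul,
          hcount1 u y hu]
      · rw [if_neg hu, Set.indicator_of_notMem (show u ∉ Set.Ioi lam from hu), zero_mul]
    have hIK : ∫⁻ x, brK H₀ lam h x ∂π = ν h (Set.Ioi lam) * J := by
      have e1 : ∫⁻ x, brK H₀ lam h x ∂π
          = ∫⁻ z, brK H₀ lam h (e.symm z) ∂((ν h).prod π') := by
        rw [← MP.lintegral_comp hKcomp]
        exact lintegral_congr fun x => by rw [e.symm_apply_apply]
      rw [e1, lintegral_congr hKsec, lintegral_prod_mul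
        ((measurable_one.indicator measurableSet_Ioi).aemeasurable) hJmeas.aemeasurable,
        lintegral_indicator_one measurableSet_Ioi]
    calc ∫⁻ x, brF R H₀ lam α h x ∂π
        ≤ ENNReal.ofReal ((1-lam)*α) * J := hIF2
      _ = ENNReal.ofReal α * (ENNReal.ofReal (1-lam) * J) := by
          rw [ENNReal.ofReal_mul h1lam, mul_assoc, mul_comm (ENNReal.ofReal (1-lam)),
            ← mul_assoc, mul_comm (ENNReal.ofReal α), mul_assoc, mul_comm J]
      _ ≤ ENNReal.ofReal α * (ν h (Set.Ioi lam) * J) := by gcongr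
      _ = ENNReal.ofReal α * ∫⁻ x, brK H₀ lam h x ∂π := by rw [hIK]
  -- Step 5: the sum of the K-integrals is at most 1
  have step5 : ∑ h ∈ H₀, ∫⁻ x, brK H₀ lam h x ∂π ≤ 1 := by
    rw [← lintegral_finset_sum _ (fun h _ => brK_meas H₀ lam h)]
    have hpt : ∀ x, ∑ h ∈ H₀, brK H₀ lam h x ≤ 1 := by
      intro x
      have hs : ∑ h ∈ H₀, brK H₀ lam h x
          = ((brCount H₀ lam x : ℝ≥0∞)) * ((brCount H₀ lam x : ℝ≥0∞))⁻¹ := by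
        rw [show (∑ h ∈ H₀, brK H₀ lam h x)
            = ∑ h ∈ H₀, (if lam < x h then ((brCount H₀ lam x : ℝ≥0∞))⁻¹ else 0) from rfl,
          ← Finset.sum_filter, Finset.sum_const, nsmul_eq_mul]
        rfl
      rw [hs]
      exact ENNReal.mul_inv_le_one _
    calc ∫⁻ x, ∑ h ∈ H₀, brK H₀ lam h x ∂π ≤ ∫⁻ _, 1 ∂π := lintegral_mono hpt
      _ = 1 := by simp
  calc ∫⁻ x, brG R H₀ x ∂π
      = ∫⁻ x, Set.indicator Nᶜ (brG R H₀) x ∂π := step1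
    _ ≤ ∫⁻ x, ∑ h ∈ H₀, brF R H₀ lam α h x ∂π := lintegral_mono step2
    _ = ∑ h ∈ H₀, ∫⁻ x, brF R H₀ lam α h x ∂π :=
        lintegral_finset_sum _ (fun h _ => brF_meas R hRmeas H₀ lam α h)
    _ ≤ ∑ h ∈ H₀, ENNReal.ofReal α * ∫⁻ x, brK H₀ lam h x ∂π := Finset.sum_le_sum step4
    _ = ENNReal.ofReal α * ∑ h ∈ H₀, ∫⁻ x, brK H₀ lam h x ∂π := (Finset.mul_sum _ _ _).symm
    _ ≤ ENNReal.ofReal α * 1 := by gcongr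
    _ = ENNReal.ofReal α := mul_one _

end

open MeasureTheory

/-- Theorem (one-stage adaptive procedure BR-1S-λ): under independence of the
p-values, any non-increasing multiple testing procedure that is self-consistent
with respect to the threshold collection
`Δ(i) = min((1-λ) α i / (m - i + 1), λ)` has FDR at most `α`. -/
theorem stmt5 {Ω : Type*} [MeasurableSpace Ω] (μ : Measure Ω) [IsProbabilityMeasure μ]
    (m : ℕ) (hm : 1 ≤ m) (p : Ω → Fin m → ℝ)
    (hp : ∀ h, Measurable fun ω => p ω h)
    (hind : ProbabilityTheory.iIndepFun
      (fun h ω => p ω h) μ)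
    (H₀ : Finset (Fin m))
    (hnull : ∀ h ∈ H₀, ∀ t ∈ Set.Icc (0 : ℝ) 1,
      μ {ω | p ω h ≤ t} ≤ ENNReal.ofReal t)
    (α lam : ℝ) (hα : α ∈ Set.Ioo (0 : ℝ) 1) (hlam : lam ∈ Set.Ioo (0 : ℝ) 1)
    (R : (Fin m → ℝ) → Finset (Fin m))
    (hRmeas : ∀ s : Finset (Fin m), MeasurableSet {x : Fin m → ℝ | R x = s})
    -- self-consistency w.r.t. Δ(i) = min((1-λ) α i/(m-i+1), λ)
    (hsc : ∀ᵐ ω ∂μ, ∀ h ∈ R (p ω),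
      p ω h ≤ min ((1 - lam) * α * ((R (p ω)).card : ℝ)
                    / ((m : ℝ) - ((R (p ω)).card : ℝ) + 1)) lam)
    -- non-increasing: |R| is coordinate-wise non-increasing in the p-values
    (hni : ∀ x y : Fin m → ℝ, x ≤ y → (R y).card ≤ (R x).card) :
    ∫⁻ ω, ENNReal.ofReal
        (((R (p ω) ∩ H₀).card : ℝ) / ((R (p ω)).card : ℝ)
          * (if 0 < (R (p ω)).card then 1 else 0)) ∂μ
      ≤ ENNReal.ofReal α := by
  classical
  obtain ⟨n, rfl⟩ : ∃ n, m = n + 1 := ⟨m - 1, (Nat.succ_pred_eq_of_pos hm).symm⟩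
  have hpm : Measurable p := measurable_pi_iff.mpr hp
  set ν : Fin (n+1) → Measure ℝ := fun i => Measure.map (fun ω => p ω i) μ with hνdef
  haveI : ∀ i, IsProbabilityMeasure (ν i) := fun i =>
    Measure.isProbabilityMeasure_map (hp i).aemeasurable
  have hmap : Measure.map p μ = Measure.pi ν := by
    refine (Measure.pi_eq fun s hs => ?_).symm
    rw [Measure.map_apply hpm (MeasurableSet.univ_pi hs)]
    have heq : p ⁻¹' Set.pi Set.univ s = ⋂ i ∈ Finset.univ, (fun ω => p ω i) ⁻¹' s i := by
      ext ω
      simp [Set.mem_pi]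
    rw [heq, hind.measure_inter_preimage_eq_mul Finset.univ (fun i _ => hs i)]
    exact Finset.prod_congr rfl fun i _ => (Measure.map_apply (hp i) (hs i)).symm
  have hnull' : ∀ h ∈ H₀, ∀ t ∈ Set.Icc (0:ℝ) 1, ν h (Set.Iic t) ≤ ENNReal.ofReal t := by
    intro h hh t ht
    rw [hνdef]
    simp only []
    rw [Measure.map_apply (hp h) measurableSet_Iic]
    exact hnull h hh t ht
  have hms : MeasurableSet {x : Fin (n+1) → ℝ | ∀ h ∈ R x,
      x h ≤ (fun k : ℕ => min ((1-lam)*α*(k:ℝ)/(((n+1:ℕ):ℝ) - (k:ℝ) + 1)) lam) (R x).card} :=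
    br_sc_meas R hRmeas (fun k : ℕ => min ((1-lam)*α*(k:ℝ)/(((n+1:ℕ):ℝ) - (k:ℝ) + 1)) lam)
  have hscπ : ∀ᵐ x ∂(Measure.pi ν), ∀ h ∈ R x,
      x h ≤ min ((1-lam)*α*((R x).card:ℝ)/(((n+1:ℕ):ℝ) - ((R x).card:ℝ) + 1)) lam := by
    rw [← hmap, ae_map_iff hpm.aemeasurable hms]
    exact hsc
  refine le_trans (le_of_eq ?_) (br_main ν H₀ hnull' α lam hα hlam R hRmeas hscπ hni)
  rw [← hmap, lintegral_map (brG_meas R hRmeas H₀) hpm]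
  rfl
end

section
/- Suppose the p-values p = (p₁,...,p_m) are independent, with true null p-values stochastically lower bounded by uniform. Let G : [0,1]^m → (0,∞) be measurable and coordinate-wise non-increasing. Let R be a non-increasing multiple testing procedure self-consistent with respect to the adaptive linear threshold Δ(p,i) = α·G(p)·i/m. Then FDR(R) ≤ (α/m) · Σ_{h ∈ H₀} E[G(p_{0,h})], where p_{0,h} denotes the p-value vector p with coordinate h replaced by 0. In particular, if E[G(p_{0,h})] ≤ 1/π₀ for every true null h, where π₀ = m₀/m and m₀ = |H₀|, then FDR(R) ≤ α. -/
open MeasureTheory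

section BKYAux
open Function

namespace BKY

variable {m : ℕ}

/-- number of rejections when coordinate `h` is replaced by `u` -/
def gc (R : (Fin m → ℝ) → Finset (Fin m)) (h : Fin m) (x : Fin m → ℝ) (u : ℝ) : ℕ :=
  (R (Function.update x h u)).card

/-- the adaptive per-unit threshold, with coordinate `h` set to `0` -/
noncomputable def cf (α : ℝ) (G : (Fin m → ℝ) → ℝ) (h : Fin m) (x : Fin m → ℝ) : ℝ :=
  α * G (Function.update x h 0) / m

def Q (α : ℝ) (G : (Fin m → ℝ) → ℝ) (R : (Fin m → ℝ) → Finset (Fin m)) (h : Fin m)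
    (k : ℕ) (x : Fin m → ℝ) : Prop :=
  ∀ n : ℕ, ∃ q : ℚ, 0 ≤ (q : ℝ) ∧ gc R h x q ≤ k ∧ (q : ℝ) < cf α G h x * k + 1 / (n + 1)

noncomputable def kap (α : ℝ) (G : (Fin m → ℝ) → ℝ) (R : (Fin m → ℝ) → Finset (Fin m))
    (h : Fin m) (x : Fin m → ℝ) : ℕ :=
  sInf {k | 1 ≤ k ∧ Q α G R h k x}

lemma update_le_update {x : Fin m → ℝ} {h : Fin m} {u v : ℝ} (huv : u ≤ v) :
    Function.update x h u ≤ Function.update x h v := by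
  intro j
  rcases eq_or_ne j h with rfl | hj
  · simp [huv]
  · simp [Function.update_apply, hj]

lemma gc_anti (R : (Fin m → ℝ) → Finset (Fin m))
    (hni : ∀ x y : Fin m → ℝ, x ≤ y → (R y).card ≤ (R x).card)
    (h : Fin m) (x : Fin m → ℝ) {u v : ℝ} (huv : u ≤ v) :
    gc R h x v ≤ gc R h x u :=
  hni _ _ (update_le_update huv)

lemma cf_nonneg {α : ℝ} (hα : 0 ≤ α) {G : (Fin m → ℝ) → ℝ} (hG : ∀ x, 0 < G x)
    (h : Fin m) (x : Fin m → ℝ) : 0 ≤ cf α G h x :=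
  div_nonneg (mul_nonneg hα (hG _).le) (Nat.cast_nonneg m)

lemma gc_le (R : (Fin m → ℝ) → Finset (Fin m)) (h : Fin m) (x : Fin m → ℝ) (u : ℝ) :
    gc R h x u ≤ m :=
  le_trans (Finset.card_le_univ _) (by simp)

lemma Q_top {α : ℝ} (hα : 0 ≤ α) {G : (Fin m → ℝ) → ℝ} (hG : ∀ x, 0 < G x)
    (R : (Fin m → ℝ) → Finset (Fin m)) (h : Fin m) (x : Fin m → ℝ) :
    Q α G R h m x := by
  intro n
  refine ⟨0, by norm_num, ?_, ?_⟩
  · simpa using gc_le R h x 0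
  · have h1 : (0:ℝ) < 1 / (n + 1) := by positivity
    have h2 : 0 ≤ cf α G h x * m :=
      mul_nonneg (cf_nonneg hα hG h x) (Nat.cast_nonneg m)
    push_cast
    linarith

lemma kap_mem (hm : 1 ≤ m) {α : ℝ} (hα : 0 ≤ α) {G : (Fin m → ℝ) → ℝ} (hG : ∀ x, 0 < G x)
    (R : (Fin m → ℝ) → Finset (Fin m)) (h : Fin m) (x : Fin m → ℝ) :
    1 ≤ kap α G R h x ∧ Q α G R h (kap α G R h x) x :=
  Nat.sInf_mem (⟨m, hm, Q_top hα hG R h x⟩ : {k | 1 ≤ k ∧ Q α G R h k x}.Nonempty)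

/-- the key pathwise bound -/
lemma key (hm : 1 ≤ m) {α : ℝ} (hα : 0 < α) {G : (Fin m → ℝ) → ℝ}
    (hGpos : ∀ x, 0 < G x) (hGanti : ∀ x y : Fin m → ℝ, x ≤ y → G y ≤ G x)
    (R : (Fin m → ℝ) → Finset (Fin m))
    (hni : ∀ x y : Fin m → ℝ, x ≤ y → (R y).card ≤ (R x).card)
    (h : Fin m) (x : Fin m → ℝ) (hx : 0 < x h)
    (hsc : x h ≤ α * G x * ((R x).card : ℝ) / m) :
    kap α G R h x ≤ (R x).card ∧ x h ≤ cf α G h x * kap α G R h x := by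
  have hupd : Function.update x h (x h) = x := Function.update_eq_self h x
  have hgx : gc R h x (x h) = (R x).card := by rw [gc, hupd]
  have hm' : (0:ℝ) < m := by exact_mod_cast hm
  have hGle : G x ≤ G (Function.update x h 0) := by
    have : Function.update x h 0 ≤ x := by
      conv_rhs => rw [← hupd]
      exact update_le_update hx.le
    exact hGanti _ _ this
  have hA : x h ≤ cf α G h x * (R x).card := by
    have : α * G x * ((R x).card : ℝ) / m ≤ α * G (Function.update x h 0) * ((R x).card : ℝ) / m := by
      have := mul_le_mul_of_nonneg_right (mul_le_mul_of_nonneg_left hGle hα.le)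
        (Nat.cast_nonneg (R x).card)
      exact div_le_div_of_nonneg_right this hm'.le
    calc x h ≤ α * G x * ((R x).card : ℝ) / m := hsc
      _ ≤ α * G (Function.update x h 0) * ((R x).card : ℝ) / m := this
      _ = cf α G h x * (R x).card := by rw [cf]; ring
  have hcard1 : 1 ≤ (R x).card := by
    rcases Nat.eq_zero_or_pos (R x).card with h0 | h1
    · rw [h0] at hA; simp at hA; linarith
    · exact h1
  have hQ : Q α G R h ((R x).card) x := by
    intro n
    have h1 : (0:ℝ) < 1 / (n + 1) := by positivity
    obtain ⟨q, hq1, hq2⟩ := exists_rat_btwn (lt_add_of_pos_right (x h) h1)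
    refine ⟨q, (hx.trans hq1).le, ?_, by linarith⟩
    rw [← hgx]
    exact gc_anti R hni h x hq1.le
  have hkle : kap α G R h x ≤ (R x).card := Nat.sInf_le ⟨hcard1, hQ⟩
  refine ⟨hkle, ?_⟩
  by_contra hcon
  push_neg at hcon
  obtain ⟨n, hn⟩ := exists_nat_one_div_lt (sub_pos.mpr hcon)
  obtain ⟨q, hq0, hqg, hqlt⟩ := (kap_mem hm hα.le hGpos R h x).2 n
  have hqxh : (q:ℝ) < x h := by linarith
  have hck : (R x).card ≤ kap α G R h x := by
    rw [← hgx]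
    exact le_trans (gc_anti R hni h x hqxh.le) hqg
  have : cf α G h x * (R x).card ≤ cf α G h x * kap α G R h x :=
    mul_le_mul_of_nonneg_left (by exact_mod_cast hck) (cf_nonneg hα.le hGpos h x)
  linarith

lemma gc_update (R : (Fin m → ℝ) → Finset (Fin m)) (h : Fin m) (x : Fin m → ℝ) (u : ℝ) :
    gc R h (Function.update x h 0) u = gc R h x u := by
  simp [gc, Function.update_idem]

lemma cf_update (α : ℝ) (G : (Fin m → ℝ) → ℝ) (h : Fin m) (x : Fin m → ℝ) :
    cf α G h (Function.update x h 0) = cf α G h x := by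
  simp [cf, Function.update_idem]

lemma kap_update (α : ℝ) (G : (Fin m → ℝ) → ℝ) (R : (Fin m → ℝ) → Finset (Fin m))
    (h : Fin m) (x : Fin m → ℝ) :
    kap α G R h (Function.update x h 0) = kap α G R h x := by
  have hQ : ∀ k, Q α G R h k (Function.update x h 0) ↔ Q α G R h k x := by
    intro k
    unfold Q
    simp_rw [gc_update, cf_update]
  simp only [kap, hQ]


lemma measurable_card (R : (Fin m → ℝ) → Finset (Fin m))
    (hRmeas : ∀ s : Finset (Fin m), MeasurableSet {x : Fin m → ℝ | R x = s}) :
    Measurable fun x => (R x).card := by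
  apply measurable_to_countable'
  intro n
  have hset : (fun x => (R x).card) ⁻¹' {n}
      = ⋃ s ∈ {s : Finset (Fin m) | s.card = n}, {x | R x = s} := by
    ext x
    simp only [Set.mem_preimage, Set.mem_singleton_iff, Set.mem_iUnion, Set.mem_setOf_eq]
    constructor
    · exact fun hc => ⟨R x, hc, rfl⟩
    · rintro ⟨s, hs, hxs⟩; rw [hxs]; exact hs
  rw [hset]
  exact MeasurableSet.biUnion (Set.to_countable _) fun s _ => hRmeas s

lemma measurable_updmap (h : Fin m) (u : ℝ) :
    Measurable fun x : Fin m → ℝ => Function.update x h u :=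
  measurable_update'.comp (measurable_id.prodMk measurable_const)

lemma measurable_gc (R : (Fin m → ℝ) → Finset (Fin m))
    (hRmeas : ∀ s : Finset (Fin m), MeasurableSet {x : Fin m → ℝ | R x = s})
    (h : Fin m) (u : ℝ) : Measurable fun x => gc R h x u :=
  (measurable_card R hRmeas).comp (measurable_updmap h u)

lemma measurable_cf (α : ℝ) (G : (Fin m → ℝ) → ℝ) (hGmeas : Measurable G) (h : Fin m) :
    Measurable (cf α G (m := m) h) :=
  (measurable_const.mul (hGmeas.comp (measurable_updmap h 0))).div_const _

lemma measurableSet_Q (α : ℝ) (G : (Fin m → ℝ) → ℝ) (hGmeas : Measurable G)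
    (R : (Fin m → ℝ) → Finset (Fin m))
    (hRmeas : ∀ s : Finset (Fin m), MeasurableSet {x : Fin m → ℝ | R x = s})
    (h : Fin m) (k : ℕ) : MeasurableSet {x | Q α G R h k x} := by
  have hset : {x | Q α G R h k x} = ⋂ n : ℕ, ⋃ q : ℚ,
      {x | 0 ≤ (q:ℝ) ∧ gc R h x q ≤ k ∧ (q : ℝ) < cf α G h x * k + 1 / (n + 1)} := by
    ext x
    simp only [Q, Set.mem_setOf_eq, Set.mem_iInter, Set.mem_iUnion]
  rw [hset]
  refine MeasurableSet.iInter fun n => MeasurableSet.iUnion fun q => ?_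
  simp only [Set.setOf_and]
  refine (MeasurableSet.const _).inter (MeasurableSet.inter ?_ ?_)
  · have : {a : Fin m → ℝ | gc R h a q ≤ k} = (fun x => gc R h x q) ⁻¹' (Set.Iic k) := rfl
    rw [this]
    exact (measurable_gc R hRmeas h q) trivial
  · exact measurableSet_lt measurable_const
      (((measurable_cf α G hGmeas h).mul measurable_const).add measurable_const)

lemma measurable_kap (hm : 1 ≤ m) {α : ℝ} (hα : 0 ≤ α) {G : (Fin m → ℝ) → ℝ}
    (hGpos : ∀ x, 0 < G x) (hGmeas : Measurable G)
    (R : (Fin m → ℝ) → Finset (Fin m))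
    (hRmeas : ∀ s : Finset (Fin m), MeasurableSet {x : Fin m → ℝ | R x = s})
    (h : Fin m) : Measurable (kap α G R h) := by
  apply measurable_to_countable'
  intro k
  have hne : ∀ x : Fin m → ℝ, {k | 1 ≤ k ∧ Q α G R h k x}.Nonempty :=
    fun x => ⟨m, hm, Q_top hα hGpos R h x⟩
  have hchar : (kap α G R h) ⁻¹' {k} = {x | 1 ≤ k ∧ Q α G R h k x}
      ∩ ⋂ j ∈ Finset.range k, {x | ¬(1 ≤ j ∧ Q α G R h j x)} := by
    ext x
    simp only [Set.mem_preimage, Set.mem_singleton_iff, Set.mem_inter_iff,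
      Set.mem_setOf_eq, Set.mem_iInter, Finset.mem_range]
    constructor
    · rintro rfl
      exact ⟨Nat.sInf_mem (hne x), fun j hj => Nat.notMem_of_lt_sInf hj⟩
    · rintro ⟨h1, h2⟩
      exact le_antisymm (Nat.sInf_le h1)
        (le_of_not_gt fun hlt => h2 _ hlt (Nat.sInf_mem (hne x)))
  rw [hchar]
  refine MeasurableSet.inter ?_ ?_
  · rw [Set.setOf_and]
    exact (MeasurableSet.const _).inter (measurableSet_Q α G hGmeas R hRmeas h k)
  · refine MeasurableSet.biInter (Set.to_countable _) fun j _ => ?_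
    have : {x : Fin m → ℝ | ¬(1 ≤ j ∧ Q α G R h j x)}
        = ({x | 1 ≤ j ∧ Q α G R h j x})ᶜ := rfl
    rw [this, Set.setOf_and]
    exact ((MeasurableSet.const _).inter (measurableSet_Q α G hGmeas R hRmeas h j)).compl


open scoped ENNReal
open ProbabilityTheory

noncomputable def F (α : ℝ) (G : (Fin m → ℝ) → ℝ) (R : (Fin m → ℝ) → Finset (Fin m))
    (h : Fin m) (z : ℝ × (Fin m → ℝ)) : ℝ≥0∞ :=
  if z.1 ≤ cf α G h z.2 * kap α G R h z.2 then ((kap α G R h z.2 : ℝ≥0∞))⁻¹ else 0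

lemma measurable_F (hm : 1 ≤ m) {α : ℝ} {G : (Fin m → ℝ) → ℝ} (hGmeas : Measurable G)
    (R : (Fin m → ℝ) → Finset (Fin m))
    (hRmeas : ∀ s : Finset (Fin m), MeasurableSet {x : Fin m → ℝ | R x = s})
    {hα : 0 ≤ α} (hGpos : ∀ x, 0 < G x) (h : Fin m) :
    Measurable (F α G R h) := by
  have hkap : Measurable (kap α G R h) := measurable_kap hm hα hGpos hGmeas R hRmeas h
  have hkapR : Measurable fun z : ℝ × (Fin m → ℝ) => ((kap α G R h z.2 : ℝ)) :=
    measurable_from_top.comp (hkap.comp measurable_snd)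
  have hcond : MeasurableSet {z : ℝ × (Fin m → ℝ) |
      z.1 ≤ cf α G h z.2 * kap α G R h z.2} :=
    measurableSet_le measurable_fst
      (((measurable_cf α G hGmeas h).comp measurable_snd).mul hkapR)
  exact Measurable.ite hcond
    ((measurable_from_top.comp (hkap.comp measurable_snd)).inv) measurable_const

lemma perh {Ω : Type*} [MeasurableSpace Ω] (μ : Measure Ω) [IsProbabilityMeasure μ]
    (hm : 1 ≤ m) (p : Ω → Fin m → ℝ) (hp : ∀ i, Measurable fun ω => p ω i)
    (hind : iIndepFun (fun i ω => p ω i) μ)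
    (h : Fin m)
    (hcdf : ∀ t : ℝ, 0 ≤ t → μ {ω | p ω h ≤ t} ≤ ENNReal.ofReal t)
    {α : ℝ} (hα : 0 < α) {G : (Fin m → ℝ) → ℝ} (hGmeas : Measurable G)
    (hGpos : ∀ x, 0 < G x) (R : (Fin m → ℝ) → Finset (Fin m))
    (hRmeas : ∀ s : Finset (Fin m), MeasurableSet {x : Fin m → ℝ | R x = s}) :
    ∫⁻ ω, F α G R h (p ω h, Function.update (p ω) h 0) ∂μ
      ≤ ENNReal.ofReal (α / m)
          * ∫⁻ ω, ENNReal.ofReal (G (Function.update (p ω) h 0)) ∂μ := by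
  set U : Ω → ℝ := fun ω => p ω h with hUdef
  set X : Ω → (Fin m → ℝ) := fun ω => Function.update (p ω) h 0 with hXdef
  have hU : Measurable U := hp h
  have hpvec : Measurable p := measurable_pi_lambda p hp
  have hX : Measurable X := (measurable_updmap h 0).comp hpvec
  -- independence of U and X
  have hST : Disjoint ({h} : Finset (Fin m)) {h}ᶜ := disjoint_compl_right
  have hI0 := hind.indepFun_finset {h} {h}ᶜ hST hp
  have hmem : h ∈ ({h} : Finset (Fin m)) := Finset.mem_singleton_self h
  set φ₁ : (({h} : Finset (Fin m)) → ℝ) → ℝ := fun v => v ⟨h, hmem⟩ with hφ₁def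
  set φ₂ : ((({h}ᶜ : Finset (Fin m)) : Finset (Fin m)) → ℝ) → (Fin m → ℝ) :=
    fun v j => if hj : j = h then 0
      else v ⟨j, by simp [Finset.mem_compl, Finset.mem_singleton, hj]⟩ with hφ₂def
  have hφ₁ : Measurable φ₁ := measurable_pi_apply _
  have hφ₂ : Measurable φ₂ := by
    apply measurable_pi_lambda
    intro j
    by_cases hj : j = h
    · simp only [hφ₂def, dif_pos hj]
      exact measurable_const
    · simp only [hφ₂def, dif_neg hj]
      exact measurable_pi_apply _
  have hI := hI0.comp hφ₁ hφ₂
  have he1 : (φ₁ ∘ fun a (i : ({h} : Finset (Fin m))) => p a i) = U := rfl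
  have he2 : (φ₂ ∘ fun a (i : (({h}ᶜ : Finset (Fin m)) : Finset (Fin m))) => p a i) = X := by
    funext ω
    funext j
    by_cases hj : j = h
    · simp [hφ₂def, hXdef, hj, Function.comp, Function.update_apply]
    · simp [hφ₂def, hXdef, hj, Function.comp, Function.update_apply]
  rw [he1, he2] at hI
  have hmap : μ.map (fun ω => (U ω, X ω)) = (μ.map U).prod (μ.map X) :=
    (indepFun_iff_map_prod_eq_prod_map_map hU.aemeasurable hX.aemeasurable).mp hI
  haveI : IsProbabilityMeasure (μ.map U) := Measure.isProbabilityMeasure_map hU.aemeasurable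
  haveI : IsProbabilityMeasure (μ.map X) := Measure.isProbabilityMeasure_map hX.aemeasurable
  have hF : Measurable (F α G R h) := measurable_F hm hGmeas R hRmeas (hα := hα.le) hGpos h
  have inner : ∀ y : Fin m → ℝ,
      ∫⁻ u, F α G R h (u, y) ∂(μ.map U) ≤ ENNReal.ofReal (cf α G h y) := by
    intro y
    set t : ℝ := cf α G h y * kap α G R h y with htdef
    set w : ℝ≥0∞ := ((kap α G R h y : ℝ≥0∞))⁻¹ with hwdef
    have hfun : (fun u => F α G R h (u, y)) = (Set.Iic t).indicator (fun _ => w) := by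
      funext u
      simp only [F, Set.indicator, Set.mem_Iic]
      rfl
    rw [hfun, lintegral_indicator_const measurableSet_Iic]
    have hmapIic : (μ.map U) (Set.Iic t) = μ {ω | p ω h ≤ t} := by
      rw [Measure.map_apply hU measurableSet_Iic]
      rfl
    have ht0 : 0 ≤ t := mul_nonneg (cf_nonneg hα.le hGpos h y) (Nat.cast_nonneg _)
    have hk1 : 1 ≤ kap α G R h y := (kap_mem hm hα.le hGpos R h y).1
    have hkne : ((kap α G R h y : ℝ≥0∞)) ≠ 0 := by
      exact Nat.cast_ne_zero.mpr (by omega)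
    have hknetop : ((kap α G R h y : ℝ≥0∞)) ≠ ⊤ := ENNReal.natCast_ne_top _
    calc w * (μ.map U) (Set.Iic t) ≤ w * ENNReal.ofReal t := by
          rw [hmapIic]
          exact mul_le_mul_right (hcdf t ht0) w
      _ = ENNReal.ofReal (cf α G h y) := by
          rw [htdef, ENNReal.ofReal_mul (cf_nonneg hα.le hGpos h y), ENNReal.ofReal_natCast,
            hwdef, mul_comm w, mul_assoc, ENNReal.mul_inv_cancel hkne hknetop, mul_one]
  have hcfmeas : Measurable fun y => ENNReal.ofReal (cf α G h y) :=
    ENNReal.measurable_ofReal.comp (measurable_cf α G hGmeas h)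
  calc ∫⁻ ω, F α G R h (U ω, X ω) ∂μ
      = ∫⁻ z, F α G R h z ∂(μ.map fun ω => (U ω, X ω)) :=
        (lintegral_map hF (hU.prodMk hX)).symm
    _ = ∫⁻ z, F α G R h z ∂((μ.map U).prod (μ.map X)) := by rw [hmap]
    _ = ∫⁻ y, ∫⁻ u, F α G R h (u, y) ∂(μ.map U) ∂(μ.map X) :=
        lintegral_prod_symm' _ hF
    _ ≤ ∫⁻ y, ENNReal.ofReal (cf α G h y) ∂(μ.map X) := lintegral_mono inner
    _ = ∫⁻ ω, ENNReal.ofReal (cf α G h (X ω)) ∂μ := lintegral_map hcfmeas hX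
    _ = ∫⁻ ω, ENNReal.ofReal (α / m) * ENNReal.ofReal (G (Function.update (p ω) h 0)) ∂μ := by
        apply lintegral_congr
        intro ω
        rw [hXdef]
        simp only []
        rw [cf_update]
        have : cf α G h (p ω) = (α / m) * G (Function.update (p ω) h 0) := by
          rw [cf]; ring
        rw [this, ENNReal.ofReal_mul (div_nonneg hα.le (Nat.cast_nonneg m))]
    _ = ENNReal.ofReal (α / m) * ∫⁻ ω, ENNReal.ofReal (G (Function.update (p ω) h 0)) ∂μ :=
        lintegral_const_mul _
          (ENNReal.measurable_ofReal.comp (hGmeas.comp ((measurable_updmap h 0).comp hpvec)))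

end BKY

end BKYAux

open scoped ENNReal

/-- Theorem (Benjamini–Krieger–Yekutieli plug-in): for independent p-values and a
coordinate-wise non-increasing estimator `G`, any non-increasing procedure
self-consistent w.r.t. the adaptive linear threshold `Δ(p,i) = α G(p) i / m`
satisfies `FDR(R) ≤ (α/m) Σ_{h ∈ H₀} E[G(p_{0,h})]`; in particular if
`E[G(p_{0,h})] ≤ π₀⁻¹ = m/m₀` for all true nulls `h`, then `FDR(R) ≤ α`. -/
theorem stmt6 {Ω : Type*} [MeasurableSpace Ω] (μ : Measure Ω) [IsProbabilityMeasure μ]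
    (m : ℕ) (hm : 1 ≤ m) (p : Ω → Fin m → ℝ)
    (hp : ∀ h, Measurable fun ω => p ω h)
    (hind : ProbabilityTheory.iIndepFun
      (fun h ω => p ω h) μ)
    (H₀ : Finset (Fin m))
    (hnull : ∀ h ∈ H₀, ∀ t ∈ Set.Icc (0 : ℝ) 1,
      μ {ω | p ω h ≤ t} ≤ ENNReal.ofReal t)
    (α : ℝ) (hα : α ∈ Set.Ioo (0 : ℝ) 1)
    (G : (Fin m → ℝ) → ℝ) (hGmeas : Measurable G) (hGpos : ∀ x, 0 < G x)
    (hGanti : ∀ x y : Fin m → ℝ, x ≤ y → G y ≤ G x)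
    (R : (Fin m → ℝ) → Finset (Fin m))
    (hRmeas : ∀ s : Finset (Fin m), MeasurableSet {x : Fin m → ℝ | R x = s})
    (hsc : ∀ᵐ ω ∂μ, ∀ h ∈ R (p ω),
      p ω h ≤ α * G (p ω) * ((R (p ω)).card : ℝ) / (m : ℝ))
    (hni : ∀ x y : Fin m → ℝ, x ≤ y → (R y).card ≤ (R x).card) :
    (∫⁻ ω, ENNReal.ofReal
        (((R (p ω) ∩ H₀).card : ℝ) / ((R (p ω)).card : ℝ)
          * (if 0 < (R (p ω)).card then 1 else 0)) ∂μ
      ≤ ENNReal.ofReal (α / m)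
          * ∑ h ∈ H₀, ∫⁻ ω, ENNReal.ofReal (G (Function.update (p ω) h 0)) ∂μ) ∧
    ((∀ h ∈ H₀, ∫⁻ ω, ENNReal.ofReal (G (Function.update (p ω) h 0)) ∂μ
        ≤ ENNReal.ofReal ((m : ℝ) / (H₀.card : ℝ))) →
      ∫⁻ ω, ENNReal.ofReal
          (((R (p ω) ∩ H₀).card : ℝ) / ((R (p ω)).card : ℝ)
            * (if 0 < (R (p ω)).card then 1 else 0)) ∂μ
        ≤ ENNReal.ofReal α) := by
  classical
  obtain ⟨hα0, hα1⟩ := hα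
  -- a.e., all null p-values are strictly positive
  have hpos : ∀ᵐ ω ∂μ, ∀ h ∈ H₀, 0 < p ω h := by
    rw [MeasureTheory.ae_all_iff]
    intro h
    by_cases hh : h ∈ H₀
    · have h0 : μ {ω | p ω h ≤ 0} = 0 :=
        le_antisymm (by simpa using hnull h hh 0 ⟨le_refl 0, zero_le_one⟩) zero_le
      refine (MeasureTheory.ae_iff).mpr ?_
      have : {ω | ¬(h ∈ H₀ → 0 < p ω h)} = {ω | p ω h ≤ 0} := by
        ext ω; simp [hh, not_lt]
      rw [this]; exact h0
    · exact Filter.Eventually.of_forall fun ω hmem => absurd hmem hh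
  set Gh : Fin m → Ω → ℝ≥0∞ :=
    fun h ω => BKY.F α G R h (p ω h, Function.update (p ω) h 0) with hGhdef
  have hGhmeas : ∀ h, Measurable (Gh h) := fun h =>
    (BKY.measurable_F hm hGmeas R hRmeas (hα := hα0.le) hGpos h).comp
      ((hp h).prodMk ((BKY.measurable_updmap h 0).comp (measurable_pi_lambda p hp)))
  -- the pathwise bound
  have hpt : ∀ᵐ ω ∂μ, ENNReal.ofReal
      ((((R (p ω) ∩ H₀).card : ℝ) / ((R (p ω)).card : ℝ))
        * (if 0 < (R (p ω)).card then 1 else 0)) ≤ ∑ h ∈ H₀, Gh h ω := by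
    filter_upwards [hsc, hpos] with ω hscω hposω
    by_cases hr : 0 < (R (p ω)).card
    · have hstep : ∀ h ∈ R (p ω) ∩ H₀, (((R (p ω)).card : ℝ≥0∞))⁻¹ ≤ Gh h ω := by
        intro h hh
        rw [Finset.mem_inter] at hh
        have hxh : 0 < p ω h := hposω h hh.2
        have hkey := BKY.key hm hα0 hGpos hGanti R hni h (p ω) hxh (hscω h hh.1)
        show (((R (p ω)).card : ℝ≥0∞))⁻¹
          ≤ BKY.F α G R h (p ω h, Function.update (p ω) h 0)
        rw [BKY.F]
        simp only [BKY.cf_update, BKY.kap_update]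
        rw [if_pos hkey.2]
        exact ENNReal.inv_le_inv' (by exact_mod_cast hkey.1)
      calc ENNReal.ofReal ((((R (p ω) ∩ H₀).card : ℝ) / ((R (p ω)).card : ℝ))
            * (if 0 < (R (p ω)).card then 1 else 0))
          = ((R (p ω) ∩ H₀).card : ℝ≥0∞) * (((R (p ω)).card : ℝ≥0∞))⁻¹ := by
            rw [if_pos hr, mul_one,
              ENNReal.ofReal_div_of_pos (by exact_mod_cast hr),
              ENNReal.ofReal_natCast, ENNReal.ofReal_natCast, div_eq_mul_inv]
        _ = ∑ _h ∈ R (p ω) ∩ H₀, (((R (p ω)).card : ℝ≥0∞))⁻¹ := by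
            rw [Finset.sum_const, nsmul_eq_mul]
        _ ≤ ∑ h ∈ R (p ω) ∩ H₀, Gh h ω := Finset.sum_le_sum hstep
        _ ≤ ∑ h ∈ H₀, Gh h ω :=
            Finset.sum_le_sum_of_subset Finset.inter_subset_right
    · simp only [if_neg hr, mul_zero, ENNReal.ofReal_zero]
      exact zero_le
  have hcdf' : ∀ h ∈ H₀, ∀ t : ℝ, 0 ≤ t → μ {ω | p ω h ≤ t} ≤ ENNReal.ofReal t := by
    intro h hh t ht
    by_cases h1 : t ≤ 1
    · exact hnull h hh t ⟨ht, h1⟩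
    · calc μ {ω | p ω h ≤ t} ≤ 1 := prob_le_one
        _ = ENNReal.ofReal 1 := ENNReal.ofReal_one.symm
        _ ≤ ENNReal.ofReal t := ENNReal.ofReal_le_ofReal (le_of_not_ge h1)
  have main : ∫⁻ ω, ENNReal.ofReal
      (((R (p ω) ∩ H₀).card : ℝ) / ((R (p ω)).card : ℝ)
        * (if 0 < (R (p ω)).card then 1 else 0)) ∂μ
      ≤ ENNReal.ofReal (α / m)
        * ∑ h ∈ H₀, ∫⁻ ω, ENNReal.ofReal (G (Function.update (p ω) h 0)) ∂μ := by
    refine le_trans (lintegral_mono_ae hpt) ?_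
    rw [lintegral_finset_sum _ fun h _ => hGhmeas h, Finset.mul_sum]
    exact Finset.sum_le_sum fun h hh =>
      BKY.perh μ hm p hp hind h (hcdf' h hh) hα0 hGmeas hGpos R hRmeas
  refine ⟨main, fun hbd => main.trans ?_⟩
  rcases Finset.eq_empty_or_nonempty H₀ with hH | hH
  · simp [hH]
  · have hc0 : (0:ℝ) < (H₀.card : ℝ) := by exact_mod_cast Finset.card_pos.mpr hH
    have hm0 : (0:ℝ) < (m : ℝ) := by exact_mod_cast hm
    calc ENNReal.ofReal (α / m)
          * (∑ h ∈ H₀, ∫⁻ ω, ENNReal.ofReal (G (Function.update (p ω) h 0)) ∂μ)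
        ≤ ENNReal.ofReal (α / m)
          * (H₀.card • ENNReal.ofReal ((m : ℝ) / (H₀.card : ℝ))) :=
          mul_le_mul_right (Finset.sum_le_card_nsmul _ _ _ fun h hh => hbd h hh) _
      _ = ENNReal.ofReal (α / m)
          * ENNReal.ofReal ((H₀.card : ℝ) * ((m : ℝ) / (H₀.card : ℝ))) := by
          rw [nsmul_eq_mul, ENNReal.ofReal_mul (Nat.cast_nonneg _), ENNReal.ofReal_natCast]
      _ = ENNReal.ofReal ((α / m) * ((H₀.card : ℝ) * ((m : ℝ) / (H₀.card : ℝ)))) :=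
          (ENNReal.ofReal_mul (div_nonneg hα0.le (Nat.cast_nonneg _))).symm
      _ = ENNReal.ofReal α := by
          congr 1
          field_simp
end

section
/- Let p₁,...,p_m be independent p-values with true null p-values stochastically lower bounded by uniform, let H₀ be the set of true nulls with |H₀| = m₀ ≥ 1, and fix λ ∈ (0,1). Define the modified Storey estimator G₁(p) = (1−λ)m / (Σ_{h} 1{p_h > λ} + 1). Then for any true null h ∈ H₀, E[G₁(p_{0,h})] ≤ m/m₀ = 1/π₀. -/
open MeasureTheory

open Finset MeasureTheory
open scoped ENNReal NNReal

lemma pascal_sum (f : ℕ → ℝ≥0∞) (q r : ℝ≥0∞) (n : ℕ) :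
    ∑ j ∈ Finset.range (n+2), (((n+1).choose j : ℝ≥0∞) * q^j * r^(n+1-j) * f j)
    = q * ∑ j ∈ Finset.range (n+1), ((n.choose j : ℝ≥0∞) * q^j * r^(n-j) * f (j+1))
      + r * ∑ j ∈ Finset.range (n+1), ((n.choose j : ℝ≥0∞) * q^j * r^(n-j) * f j) := by
  rw [Finset.sum_range_succ' (fun j => ((n+1).choose j : ℝ≥0∞) * q^j * r^(n+1-j) * f j) (n+1)]
  have h1 : ∀ i ∈ Finset.range (n+1),
      (((n+1).choose (i+1) : ℝ≥0∞) * q^(i+1) * r^(n+1-(i+1)) * f (i+1))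
      = q * ((n.choose i : ℝ≥0∞) * q^i * r^(n-i) * f (i+1))
        + ((n.choose (i+1) : ℝ≥0∞) * q^(i+1) * r^(n-i) * f (i+1)) := by
    intro i hi
    rw [Nat.choose_succ_succ n i]
    push_cast
    ring
  rw [Finset.sum_congr rfl h1, Finset.sum_add_distrib, ← Finset.mul_sum]
  have h2 : (∑ i ∈ Finset.range (n+1), ((n.choose (i+1) : ℝ≥0∞) * q^(i+1) * r^(n-i) * f (i+1)))
        + ((n+1).choose 0 : ℝ≥0∞) * q^0 * r^(n+1-0) * f 0
      = r * ∑ j ∈ Finset.range (n+1), ((n.choose j : ℝ≥0∞) * q^j * r^(n-j) * f j) := by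
    rw [Finset.sum_range_succ, Nat.choose_succ_self]
    simp only [Nat.cast_zero, zero_mul, add_zero, Nat.choose_zero_right, Nat.cast_one, one_mul,
      pow_zero, Nat.sub_zero]
    rw [Finset.mul_sum,
      Finset.sum_range_succ' (fun j => r * ((n.choose j : ℝ≥0∞) * q^j * r^(n-j) * f j)) n]
    congr 1
    · refine Finset.sum_congr rfl fun i hi => ?_
      have hin : i < n := Finset.mem_range.mp hi
      have : n - i = (n - (i+1)) + 1 := by omega
      rw [this, pow_succ]
      ring
    · simp only [Nat.choose_zero_right, Nat.cast_one, one_mul, pow_zero, Nat.sub_zero]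
      rw [pow_succ]
      ring
  rw [add_assoc, h2]

lemma convex_bound (A B a q : ℝ≥0∞) (hAB : A ≤ B) (hq : q ≤ a) (ha : a ≤ 1) :
    a * A + (1 - a) * B ≤ q * A + (1 - q) * B := by
  have hsub : (1 : ℝ≥0∞) - q = (a - q) + (1 - a) := by
    refine (ENNReal.eq_sub_of_add_eq (ne_top_of_le_ne_top ENNReal.one_ne_top (hq.trans ha)) ?_).symm
    rw [add_right_comm, tsub_add_cancel_of_le hq, add_tsub_cancel_of_le ha]
  calc a * A + (1 - a) * B = q * A + (a - q) * A + (1 - a) * B := by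
        rw [← add_mul, add_tsub_cancel_of_le hq]
    _ ≤ q * A + (a - q) * B + (1 - a) * B := by gcongr
    _ = q * A + ((a - q) + (1 - a)) * B := by ring
    _ = q * A + (1 - q) * B := by rw [← hsub]

lemma binom_inv_bound (n : ℕ) (q : ℝ≥0∞) (hq1 : q ≤ 1) :
    ∑ j ∈ Finset.range (n+1),
        ((n.choose j : ℝ≥0∞) * q^j * (1-q)^(n-j) * ((j : ℝ≥0∞) + 1)⁻¹)
      ≤ (((n : ℝ≥0∞) + 1) * q)⁻¹ := by
  rcases eq_or_ne q 0 with rfl | hq0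
  · simp
  have hqt : q ≠ ∞ := ne_top_of_le_ne_top ENNReal.one_ne_top hq1
  rw [ENNReal.le_inv_iff_mul_le]
  have key : (∑ j ∈ Finset.range (n+1),
        ((n.choose j : ℝ≥0∞) * q^j * (1-q)^(n-j) * ((j : ℝ≥0∞) + 1)⁻¹)) * (((n : ℝ≥0∞) + 1) * q)
      = ∑ j ∈ Finset.range (n+1), (((n+1).choose (j+1) : ℝ≥0∞) * q^(j+1) * (1-q)^(n-j)) := by
    rw [Finset.sum_mul]
    refine Finset.sum_congr rfl fun j hj => ?_
    have hch : ((n+1 : ℕ) : ℝ≥0∞) * (n.choose j : ℝ≥0∞) = ((n+1).choose (j+1) : ℝ≥0∞) * ((j:ℝ≥0∞)+1) := by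
      have := Nat.add_one_mul_choose_eq n j
      have h2 : (n+1) * n.choose j = (n+1).choose (j+1) * (j+1) := by
        simpa [Nat.succ_eq_add_one] using this
      exact_mod_cast congrArg (Nat.cast : ℕ → ℝ≥0∞) h2
    have hj1 : ((j:ℝ≥0∞)+1) ≠ 0 := by simp
    have hj2 : ((j:ℝ≥0∞)+1) ≠ ∞ := by
      simp [ENNReal.add_ne_top]
    calc (n.choose j : ℝ≥0∞) * q^j * (1-q)^(n-j) * ((j : ℝ≥0∞) + 1)⁻¹ * (((n : ℝ≥0∞) + 1) * q)
        = (((n:ℝ≥0∞)+1) * (n.choose j : ℝ≥0∞)) * ((j : ℝ≥0∞) + 1)⁻¹ * (q^j * q) * (1-q)^(n-j) := by ring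
      _ = (((n+1).choose (j+1) : ℝ≥0∞) * ((j:ℝ≥0∞)+1)) * ((j : ℝ≥0∞) + 1)⁻¹ * q^(j+1) * (1-q)^(n-j) := by
          rw [show ((n:ℝ≥0∞)+1) = ((n+1:ℕ):ℝ≥0∞) by push_cast; ring, hch, pow_succ]
      _ = ((n+1).choose (j+1) : ℝ≥0∞) * q^(j+1) * (1-q)^(n-j) := by
          rw [mul_assoc (((n+1).choose (j+1) : ℝ≥0∞)), ENNReal.mul_inv_cancel hj1 hj2, mul_one]
  rw [key]
  have emb : ∑ j ∈ Finset.range (n+1), (((n+1).choose (j+1) : ℝ≥0∞) * q^(j+1) * (1-q)^(n-j))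
      ≤ ∑ k ∈ Finset.range (n+2), (((n+1).choose k : ℝ≥0∞) * q^k * (1-q)^(n+1-k)) := by
    rw [Finset.sum_range_succ' (fun k => ((n+1).choose k : ℝ≥0∞) * q^k * (1-q)^(n+1-k)) (n+1)]
    exact le_add_right (le_of_eq (Finset.sum_congr rfl fun i hi => by rw [Nat.succ_sub_succ]))
  refine emb.trans ?_
  have : ∑ k ∈ Finset.range (n+2), (((n+1).choose k : ℝ≥0∞) * q^k * (1-q)^(n+1-k)) = (q + (1-q))^(n+1) := by
    rw [add_pow]
    exact Finset.sum_congr rfl fun k hk => by ring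
  rw [this, add_tsub_cancel_of_le hq1, one_pow]

lemma binom_dominate {Ω : Type*} [MeasurableSpace Ω] (μ : Measure Ω) [IsProbabilityMeasure μ]
    {ι : Type*} (X : ι → Ω → ℕ) (hX : ∀ i, Measurable (X i)) (hval : ∀ i ω, X i ω ≤ 1)
    (hind : ProbabilityTheory.iIndepFun X μ)
    (q : ℝ≥0∞) (hq1 : q ≤ 1) :
    ∀ (S : Finset ι), (∀ i ∈ S, q ≤ μ {ω | X i ω = 1}) →
      ∀ (f : ℕ → ℝ≥0∞), Antitone f →
      ∫⁻ ω, f (∑ i ∈ S, X i ω) ∂μ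
        ≤ ∑ j ∈ Finset.range (S.card+1),
            ((S.card.choose j : ℝ≥0∞) * q^j * (1-q)^(S.card-j) * f j) := by
  intro S
  classical
  induction S using Finset.induction_on with
  | empty =>
    intro _ f hf
    simp [lintegral_const]
  | @insert a S ha ih =>
    intro hqA f hf
    set N : Ω → ℕ := fun ω => ∑ i ∈ S, X i ω with hN
    have hNmeas : Measurable N := Finset.measurable_sum S (fun i _ => hX i)
    have hXa1 : MeasurableSet {ω | X a ω = 1} := hX a (measurableSet_singleton 1)
    have hXa0 : MeasurableSet {ω | X a ω = 0} := hX a (measurableSet_singleton 0)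
    have hpoint : ∀ ω, f (∑ i ∈ insert a S, X i ω) =
        (if X a ω = 1 then (1:ℝ≥0∞) else 0) * f (N ω + 1)
        + (if X a ω = 0 then (1:ℝ≥0∞) else 0) * f (N ω) := by
      intro ω
      rw [Finset.sum_insert ha]
      rcases Nat.le_one_iff_eq_zero_or_eq_one.mp (hval a ω) with h | h <;>
        simp [h, hN, add_comm]
    have hma1 : Measurable fun ω => (if X a ω = 1 then (1:ℝ≥0∞) else 0) :=
      Measurable.ite hXa1 measurable_const measurable_const
    have hma0 : Measurable fun ω => (if X a ω = 0 then (1:ℝ≥0∞) else 0) :=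
      Measurable.ite (hX a (measurableSet_singleton 0)) measurable_const measurable_const
    have hg1 : Measurable fun ω => f (N ω + 1) :=
      (measurable_from_top (f := fun n : ℕ => f (n+1))).comp hNmeas
    have hg0 : Measurable fun ω => f (N ω) :=
      (measurable_from_top (f := f)).comp hNmeas
    have hindNa : ProbabilityTheory.IndepFun (fun ω => ∑ i ∈ S, X i ω) (X a) μ := by
      have := hind.indepFun_finsetSum_of_notMem hX ha
      have hsum_eq : (∑ i ∈ S, X i) = fun ω => ∑ i ∈ S, X i ω := by
        funext ω; simp [Finset.sum_apply]
      rwa [hsum_eq] at this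
    have hI1 : ProbabilityTheory.IndepFun (fun ω => f (N ω + 1))
        (fun ω => (if X a ω = 1 then (1:ℝ≥0∞) else 0)) μ :=
      hindNa.comp (measurable_from_top (f := fun n : ℕ => f (n+1)))
        (measurable_from_top (f := fun n : ℕ => (if n = 1 then (1:ℝ≥0∞) else 0)))
    have hI0 : ProbabilityTheory.IndepFun (fun ω => f (N ω))
        (fun ω => (if X a ω = 0 then (1:ℝ≥0∞) else 0)) μ :=
      hindNa.comp (measurable_from_top (f := f))
        (measurable_from_top (f := fun n : ℕ => (if n = 0 then (1:ℝ≥0∞) else 0)))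
    have hint1 : ∫⁻ ω, (if X a ω = 1 then (1:ℝ≥0∞) else 0) ∂μ = μ {ω | X a ω = 1} := by
      rw [← lintegral_indicator_one hXa1]
      exact lintegral_congr fun ω => by
        by_cases h : X a ω = 1 <;> simp [Set.indicator, h]
    have hcompl : {ω | X a ω = 0} = {ω | X a ω = 1}ᶜ := by
      ext ω; have := hval a ω; simp only [Set.mem_setOf_eq, Set.mem_compl_iff]; omega
    have hint0 : ∫⁻ ω, (if X a ω = 0 then (1:ℝ≥0∞) else 0) ∂μ = 1 - μ {ω | X a ω = 1} := by
      rw [← prob_compl_eq_one_sub hXa1, ← hcompl,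
        ← lintegral_indicator_one hXa0]
      exact lintegral_congr fun ω => by
        by_cases h : X a ω = 0 <;> simp [Set.indicator, h]
    set A := ∫⁻ ω, f (N ω + 1) ∂μ with hA
    set B := ∫⁻ ω, f (N ω) ∂μ with hB
    have hsplit : ∫⁻ ω, f (∑ i ∈ insert a S, X i ω) ∂μ
        = μ {ω | X a ω = 1} * A + (1 - μ {ω | X a ω = 1}) * B := by
      rw [lintegral_congr hpoint, lintegral_add_left (show Measurable (fun ω => (if X a ω = 1 then (1:ℝ≥0∞) else 0) * f (N ω + 1)) from hma1.mul hg1)]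
      congr 1
      · calc ∫⁻ ω, (if X a ω = 1 then (1:ℝ≥0∞) else 0) * f (N ω + 1) ∂μ
            = ∫⁻ ω, ((fun ω => f (N ω + 1)) * fun ω => (if X a ω = 1 then (1:ℝ≥0∞) else 0)) ω ∂μ :=
              lintegral_congr fun ω => by simp [mul_comm]
          _ = A * ∫⁻ ω, (if X a ω = 1 then (1:ℝ≥0∞) else 0) ∂μ :=
              ProbabilityTheory.lintegral_mul_eq_lintegral_mul_lintegral_of_indepFun hg1 hma1 hI1
          _ = μ {ω | X a ω = 1} * A := by rw [hint1, mul_comm]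
      · calc ∫⁻ ω, (if X a ω = 0 then (1:ℝ≥0∞) else 0) * f (N ω) ∂μ
            = ∫⁻ ω, ((fun ω => f (N ω)) * fun ω => (if X a ω = 0 then (1:ℝ≥0∞) else 0)) ω ∂μ :=
              lintegral_congr fun ω => by simp [mul_comm]
          _ = B * ∫⁻ ω, (if X a ω = 0 then (1:ℝ≥0∞) else 0) ∂μ :=
              ProbabilityTheory.lintegral_mul_eq_lintegral_mul_lintegral_of_indepFun hg0 hma0 hI0
          _ = (1 - μ {ω | X a ω = 1}) * B := by rw [hint0, mul_comm]
    have hAB : A ≤ B := lintegral_mono fun ω => hf (Nat.le_succ _)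
    have hqa : q ≤ μ {ω | X a ω = 1} := hqA a (Finset.mem_insert_self a S)
    have ha1 : μ {ω | X a ω = 1} ≤ 1 := prob_le_one
    have hconv := convex_bound A B (μ {ω | X a ω = 1}) q hAB hqa ha1
    have ihA := ih (fun i hi => hqA i (Finset.mem_insert_of_mem hi))
      (fun k => f (k+1)) (fun x y h => hf (by omega))
    have ihB := ih (fun i hi => hqA i (Finset.mem_insert_of_mem hi)) f hf
    rw [hsplit, Finset.card_insert_of_notMem ha, pascal_sum f q (1-q) S.card]
    exact hconv.trans (add_le_add (mul_le_mul_right ihA q) (mul_le_mul_right ihB (1-q)))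


/-- The modified Storey estimator `G₁(p) = (1-λ) m / (Σ_h 1{p_h > λ} + 1)`
satisfies `E[G₁(p_{0,h})] ≤ m/m₀ = 1/π₀` for every true null `h`, under
independence of the p-values. Here `p_{0,h}` is `p` with coordinate `h` set to 0. -/
theorem stmt7 {Ω : Type*} [MeasurableSpace Ω] (μ : Measure Ω) [IsProbabilityMeasure μ]
    (m : ℕ) (hm : 1 ≤ m) (p : Ω → Fin m → ℝ)
    (hp : ∀ h, Measurable fun ω => p ω h)
    (hind : ProbabilityTheory.iIndepFun
      (fun h ω => p ω h) μ)
    (H₀ : Finset (Fin m)) (hm₀ : 1 ≤ H₀.card)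
    (hnull : ∀ h ∈ H₀, ∀ t ∈ Set.Icc (0 : ℝ) 1,
      μ {ω | p ω h ≤ t} ≤ ENNReal.ofReal t)
    (lam : ℝ) (hlam : lam ∈ Set.Ioo (0 : ℝ) 1) :
    ∀ h ∈ H₀,
      ∫⁻ ω, ENNReal.ofReal
          ((1 - lam) * (m : ℝ)
            / ((∑ h' : Fin m,
                if lam < Function.update (p ω) h 0 h' then (1 : ℝ) else 0) + 1)) ∂μ
        ≤ ENNReal.ofReal ((m : ℝ) / (H₀.card : ℝ)) := by
  intro h hh
  classical
  obtain ⟨hlam0, hlam1⟩ := hlam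
  set S : Finset (Fin m) := H₀.erase h with hS
  set g : ℝ → ℕ := fun x => if lam < x then 1 else 0 with hgdef
  have hg : Measurable g := Measurable.ite measurableSet_Ioi measurable_const measurable_const
  set X : Fin m → Ω → ℕ := fun i ω => g (p ω i) with hXdef
  have hXmeas : ∀ i, Measurable (X i) := fun i => hg.comp (hp i)
  have hval : ∀ i ω, X i ω ≤ 1 := by
    intro i ω; simp only [hXdef, hgdef]; split_ifs <;> omega
  have hindX : ProbabilityTheory.iIndepFun X μ :=
    hind.comp (fun _ => g) (fun _ => hg)
  set q : ℝ≥0∞ := ENNReal.ofReal (1 - lam) with hqdef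
  have hq1 : q ≤ 1 := ENNReal.ofReal_le_one.mpr (by linarith)
  have hq0 : q ≠ 0 := (ENNReal.ofReal_pos.mpr (by linarith)).ne'
  have hqt : q ≠ ∞ := ENNReal.ofReal_ne_top
  have hqA : ∀ i ∈ S, q ≤ μ {ω | X i ω = 1} := by
    intro i hi
    have hiH : i ∈ H₀ := Finset.mem_of_mem_erase hi
    have hset : {ω | X i ω = 1} = {ω | p ω i ≤ lam}ᶜ := by
      ext ω
      by_cases hc : lam < p ω i <;> simp [hXdef, hgdef, hc, not_le]
    have hle : μ {ω | p ω i ≤ lam} ≤ ENNReal.ofReal lam :=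
      hnull i hiH lam ⟨hlam0.le, hlam1.le⟩
    have hms : MeasurableSet {ω | p ω i ≤ lam} := measurableSet_le (hp i) measurable_const
    rw [hset, prob_compl_eq_one_sub hms]
    calc q = 1 - ENNReal.ofReal lam := by
            rw [hqdef, ENNReal.ofReal_sub _ hlam0.le, ENNReal.ofReal_one]
      _ ≤ 1 - μ {ω | p ω i ≤ lam} := tsub_le_tsub_left hle 1
  set f : ℕ → ℝ≥0∞ := fun k => ((k : ℝ≥0∞) + 1)⁻¹ with hfdef
  have hf : Antitone f := by
    intro x y hxy
    simp only [hfdef]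
    exact ENNReal.inv_le_inv' (add_le_add_left (Nat.cast_le.mpr hxy) 1)
  have hkey := binom_dominate μ X hXmeas hval hindX q hq1 S hqA f hf
  have hbin := binom_inv_bound S.card q hq1
  have hNint : ∫⁻ ω, f (∑ i ∈ S, X i ω) ∂μ ≤ (((S.card : ℝ≥0∞) + 1) * q)⁻¹ :=
    hkey.trans hbin
  -- pointwise bound of the integrand
  have hpt : ∀ ω, ENNReal.ofReal
      ((1 - lam) * (m : ℝ)
        / ((∑ h' : Fin m,
            if lam < Function.update (p ω) h 0 h' then (1 : ℝ) else 0) + 1))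
      ≤ (q * m) * f (∑ i ∈ S, X i ω) := by
    intro ω
    set T : ℝ := ∑ h' : Fin m, (if lam < Function.update (p ω) h 0 h' then (1:ℝ) else 0) with hT
    set Nn : ℕ := ∑ i ∈ S, X i ω with hNn
    have hTN : (Nn : ℝ) ≤ T := by
      have h1 : (Nn : ℝ) = ∑ i ∈ S, ((X i ω : ℝ)) := by push_cast [hNn]; rfl
      have h2 : ∀ i ∈ S, (X i ω : ℝ) = (if lam < Function.update (p ω) h 0 i then (1:ℝ) else 0) := by
        intro i hi
        have hne : i ≠ h := Finset.ne_of_mem_erase hi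
        rw [Function.update_of_ne hne]
        simp only [hXdef, hgdef]
        split_ifs <;> simp
      rw [h1, Finset.sum_congr rfl h2, hT]
      refine Finset.sum_le_sum_of_subset_of_nonneg (Finset.subset_univ S) ?_
      intro i _ _
      split_ifs <;> norm_num
    have hnum : (0:ℝ) ≤ (1 - lam) * m := mul_nonneg (by linarith) (Nat.cast_nonneg m)
    have hd1 : (0:ℝ) < (Nn : ℝ) + 1 := by positivity
    have hstep1 : (1 - lam) * (m:ℝ) / (T + 1) ≤ (1 - lam) * m / ((Nn:ℝ) + 1) := by
      gcongr <;> linarith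
    refine (ENNReal.ofReal_le_ofReal hstep1).trans (le_of_eq ?_)
    rw [div_eq_mul_inv, ENNReal.ofReal_mul hnum, ENNReal.ofReal_mul (by linarith),
      ENNReal.ofReal_inv_of_pos hd1, ENNReal.ofReal_add (Nat.cast_nonneg _) zero_le_one,
      ENNReal.ofReal_natCast, ENNReal.ofReal_natCast, ENNReal.ofReal_one]
  have hNmeas : Measurable fun ω => ∑ i ∈ S, X i ω := Finset.measurable_sum S (fun i _ => hXmeas i)
  have hmain : ∫⁻ ω, ENNReal.ofReal
      ((1 - lam) * (m : ℝ)
        / ((∑ h' : Fin m,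
            if lam < Function.update (p ω) h 0 h' then (1 : ℝ) else 0) + 1)) ∂μ
      ≤ (q * m) * (((S.card : ℝ≥0∞) + 1) * q)⁻¹ := by
    calc _ ≤ ∫⁻ ω, (q * m) * f (∑ i ∈ S, X i ω) ∂μ := lintegral_mono hpt
      _ = (q * m) * ∫⁻ ω, f (∑ i ∈ S, X i ω) ∂μ :=
          lintegral_const_mul _ ((measurable_from_top (f := f)).comp hNmeas)
      _ ≤ _ := mul_le_mul_right hNint _
  refine hmain.trans (le_of_eq ?_)
  have hcard : (S.card : ℝ≥0∞) + 1 = (H₀.card : ℝ≥0∞) := by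
    have : S.card + 1 = H₀.card := by
      rw [hS, Finset.card_erase_of_mem hh]; omega
    exact_mod_cast congrArg (Nat.cast : ℕ → ℝ≥0∞) this
  have hc0 : ((H₀.card : ℝ≥0∞)) ≠ 0 := by
    simp only [ne_eq, Nat.cast_eq_zero]; omega
  have hct : ((H₀.card : ℝ≥0∞)) ≠ ∞ := ENNReal.natCast_ne_top _
  rw [hcard, ENNReal.mul_inv (Or.inl hc0) (Or.inl hct)]
  rw [ENNReal.ofReal_div_of_pos (by exact_mod_cast Nat.pos_of_ne_zero (by omega)),
    ENNReal.ofReal_natCast, ENNReal.ofReal_natCast, div_eq_mul_inv]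
  calc q * m * ((H₀.card : ℝ≥0∞)⁻¹ * q⁻¹)
      = (m : ℝ≥0∞) * (H₀.card : ℝ≥0∞)⁻¹ * (q * q⁻¹) := by ring
    _ = (m : ℝ≥0∞) * (H₀.card : ℝ≥0∞)⁻¹ := by
        rw [ENNReal.mul_inv_cancel hq0 hqt, mul_one]
end

section
/- Suppose m = m₀ identical p-values p₁ = p₂ = ... = p_m with p₁ uniform on [0,1] (maximal dependence, all hypotheses true). Then the step-up procedure with threshold collection Δ(i) = α·β(i)/m has FDR(R) = Δ(m) = α·β(m)/m. In particular, the one-stage adaptive procedure BR-1S-λ, with Δ(i) = min((1−λ)αi/(m−i+1), λ), has FDR equal to min(λ, (1−λ)αm). -/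
open MeasureTheory

/-- `sortedVal x i` is the `i`-th smallest value of `x` (`1 ≤ i ≤ m`), with
`sortedVal x 0 = 0`, i.e. the ordered p-value `p_(i)`. -/
noncomputable def sortedVal {m : ℕ} (x : Fin m → ℝ) (i : ℕ) : ℝ :=
  if i = 0 then 0
  else (Multiset.sort (Finset.univ.val.map x) (· ≤ ·)).getD (i - 1) 0

/-- `stepUpIndex Δ x = max{0 ≤ i ≤ m : p_(i) ≤ Δ(i)}`. -/
noncomputable def stepUpIndex {m : ℕ} (Δ : ℕ → ℝ) (x : Fin m → ℝ) : ℕ :=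
  ((Finset.range (m + 1)).filter (fun i => sortedVal x i ≤ Δ i)).sup id

/-- The step-up procedure with threshold collection `Δ`:
`R = {h : p_h ≤ p_(k)}` with `k = stepUpIndex Δ x`. -/
noncomputable def stepUp {m : ℕ} (Δ : ℕ → ℝ) (x : Fin m → ℝ) : Finset (Fin m) :=
  Finset.univ.filter (fun h => x h ≤ sortedVal x (stepUpIndex Δ x))

lemma sortedVal_const {m : ℕ} (c : ℝ) {i : ℕ} (hi1 : 1 ≤ i) (him : i ≤ m) :
    sortedVal (fun _ : Fin m => c) i = c := by
  unfold sortedVal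
  rw [if_neg (by omega)]
  set l := Multiset.sort (Finset.univ.val.map (fun _ : Fin m => c)) (· ≤ ·) with hl
  have hlen : l.length = m := by
    rw [hl, Multiset.length_sort, Multiset.card_map]
    simp
  have hidx : i - 1 < l.length := by omega
  rw [List.getD_eq_getElem _ _ hidx]
  have hmem : l[i - 1] ∈ l := List.getElem_mem hidx
  obtain ⟨a, -, ha⟩ := Multiset.mem_map.mp ((Multiset.mem_sort _).mp hmem)
  exact ha.symm

lemma sortedVal_zero {m : ℕ} (x : Fin m → ℝ) : sortedVal x 0 = 0 := by
  simp [sortedVal]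

lemma stepUp_const {m : ℕ} (hm : 1 ≤ m) (Δ : ℕ → ℝ) (hΔ0 : Δ 0 = 0)
    (hmono : ∀ i ≤ m, Δ i ≤ Δ m) (h0 : 0 ≤ Δ m) (c : ℝ) :
    stepUp Δ (fun _ : Fin m => c) = if c ≤ Δ m then Finset.univ else ∅ := by
  by_cases h : c ≤ Δ m
  · rw [if_pos h]
    have hk : stepUpIndex Δ (fun _ : Fin m => c) = m := by
      apply le_antisymm
      · apply Finset.sup_le
        intro i hi
        simp only [Finset.mem_filter, Finset.mem_range] at hi
        simpa [id] using Nat.lt_succ_iff.mp hi.1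
      · apply Finset.le_sup (f := id) (b := m)
        simp only [Finset.mem_filter, Finset.mem_range]
        refine ⟨by omega, ?_⟩
        rwa [sortedVal_const c hm le_rfl]
    unfold stepUp
    rw [hk, sortedVal_const c hm le_rfl]
    simp
  · rw [if_neg h]
    have hne : ((Finset.range (m + 1)).filter
        (fun i => sortedVal (fun _ : Fin m => c) i ≤ Δ i)).Nonempty := by
      refine ⟨0, ?_⟩
      simp [sortedVal_zero, hΔ0]
    obtain ⟨b, hb, hbe⟩ := Finset.exists_mem_eq_sup _ hne id
    have hk : stepUpIndex Δ (fun _ : Fin m => c) = b := hbe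
    simp only [Finset.mem_filter, Finset.mem_range] at hb
    have hb0 : b = 0 := by
      by_contra hb0
      have hb1 : 1 ≤ b := by omega
      have hbm : b ≤ m := by omega
      rw [sortedVal_const c hb1 hbm] at hb
      exact h (hb.2.trans (hmono b hbm))
    unfold stepUp
    rw [hk, hb0, sortedVal_zero]
    have : ¬ (c ≤ 0) := by
      intro hc; exact h (hc.trans h0)
    ext x
    simp [this]

lemma key {Ω : Type*} [MeasurableSpace Ω] (μ : Measure Ω) [IsProbabilityMeasure μ]
    (m : ℕ) (hm : 1 ≤ m) (p₁ : Ω → ℝ) (hp₁ : Measurable p₁)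
    (hunif : ∀ u ∈ Set.Icc (0 : ℝ) 1, μ {ω | p₁ ω ≤ u} = ENNReal.ofReal u)
    (Δ : ℕ → ℝ) (hΔ0 : Δ 0 = 0) (hmono : ∀ i ≤ m, Δ i ≤ Δ m)
    (h0 : 0 ≤ Δ m) (h1 : Δ m ≤ 1) :
    ∫⁻ ω, ENNReal.ofReal
        ((((stepUp Δ (fun _ : Fin m => p₁ ω) ∩ Finset.univ).card : ℝ))
          / ((stepUp Δ (fun _ : Fin m => p₁ ω)).card : ℝ)
          * (if 0 < (stepUp Δ (fun _ : Fin m => p₁ ω)).card then 1 else 0)) ∂μ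
      = ENNReal.ofReal (Δ m) := by
  have hmeas : MeasurableSet {ω | p₁ ω ≤ Δ m} := measurableSet_le hp₁ measurable_const
  have heq : ∀ ω, ENNReal.ofReal
        ((((stepUp Δ (fun _ : Fin m => p₁ ω) ∩ Finset.univ).card : ℝ))
          / ((stepUp Δ (fun _ : Fin m => p₁ ω)).card : ℝ)
          * (if 0 < (stepUp Δ (fun _ : Fin m => p₁ ω)).card then 1 else 0))
      = Set.indicator {ω | p₁ ω ≤ Δ m} (fun _ => (1 : ENNReal)) ω := by
    intro ω
    rw [stepUp_const hm Δ hΔ0 hmono h0 (p₁ ω)]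
    by_cases h : p₁ ω ≤ Δ m
    · have hm' : ((m : ℝ)) ≠ 0 := Nat.cast_ne_zero.mpr (by omega)
      simp [h, Set.indicator_apply, Set.mem_setOf_eq, Finset.card_univ, hm', div_self, Nat.pos_of_ne_zero, show ¬ m = 0 by omega]
    · simp [h, Set.indicator_apply, Set.mem_setOf_eq]
  rw [lintegral_congr heq]
  rw [lintegral_indicator hmeas]
  simp [hunif (Δ m) ⟨h0, h1⟩]

/-- Under maximal dependence (all `m = m₀` p-values equal to a single uniform
p-value `p₁`), the step-up procedure with threshold collection `Δ(i) = α β(i)/m`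
(for non-decreasing `β` with `β(0) = 0`) has FDR exactly `α β(m)/m`; in
particular BR-1S-λ has FDR `min(λ, (1-λ) α m)`. -/
theorem stmt9 {Ω : Type*} [MeasurableSpace Ω] (μ : Measure Ω) [IsProbabilityMeasure μ]
    (m : ℕ) (hm : 1 ≤ m) (p₁ : Ω → ℝ) (hp₁ : Measurable p₁)
    (hunif : ∀ u ∈ Set.Icc (0 : ℝ) 1, μ {ω | p₁ ω ≤ u} = ENNReal.ofReal u)
    (α lam : ℝ) (hα : α ∈ Set.Ioo (0 : ℝ) 1) (hlam : lam ∈ Set.Ioo (0 : ℝ) 1)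
    (β : ℕ → ℝ) (hβmono : Monotone β) (hβ0 : β 0 = 0) (hβm : α * β m / m ≤ 1) :
    (∫⁻ ω, ENNReal.ofReal
        ((((stepUp (fun i => α * β i / m) (fun _ : Fin m => p₁ ω)
              ∩ Finset.univ).card : ℝ))
          / ((stepUp (fun i => α * β i / m) (fun _ : Fin m => p₁ ω)).card : ℝ)
          * (if 0 < (stepUp (fun i => α * β i / m) (fun _ : Fin m => p₁ ω)).card
              then 1 else 0)) ∂μ
      = ENNReal.ofReal (α * β m / m)) ∧
    (∫⁻ ω, ENNReal.ofReal
        ((((stepUp (fun i => min ((1 - lam) * α * i / ((m : ℝ) - i + 1)) lam)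
              (fun _ : Fin m => p₁ ω) ∩ Finset.univ).card : ℝ))
          / ((stepUp (fun i => min ((1 - lam) * α * i / ((m : ℝ) - i + 1)) lam)
              (fun _ : Fin m => p₁ ω)).card : ℝ)
          * (if 0 < (stepUp (fun i => min ((1 - lam) * α * i / ((m : ℝ) - i + 1)) lam)
              (fun _ : Fin m => p₁ ω)).card then 1 else 0)) ∂μ
      = ENNReal.ofReal (min lam ((1 - lam) * α * m))) := by
  obtain ⟨hα0, hα1⟩ := hα
  obtain ⟨hl0, hl1⟩ := hlam
  have hβm0 : 0 ≤ β m := hβ0 ▸ hβmono (Nat.zero_le m)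
  constructor
  · exact key μ m hm p₁ hp₁ hunif _
      (by simp [hβ0])
      (fun i hi => by
        have hmul : α * β i ≤ α * β m := mul_le_mul_of_nonneg_left (hβmono hi) hα0.le
        have hmpos : (0 : ℝ) < m := by exact_mod_cast Nat.pos_of_ne_zero (by omega)
        exact div_le_div_of_nonneg_right hmul hmpos.le)
      (by positivity) hβm
  · have hmm : ((m : ℝ) - (m : ℕ) + 1) = 1 := by push_cast; ring
    have hΔm : min ((1 - lam) * α * (m : ℕ) / ((m : ℝ) - (m : ℕ) + 1)) lam
        = min lam ((1 - lam) * α * m) := by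
      rw [hmm, div_one, min_comm]
    rw [← hΔm]
    refine key μ m hm p₁ hp₁ hunif _ ?_ ?_ ?_ ?_
    · simp [min_eq_left hl0.le]
    · intro i hi
      apply min_le_min _ le_rfl
      have hi' : (i : ℝ) ≤ m := Nat.cast_le.mpr hi
      have hden : 1 ≤ (m : ℝ) - i + 1 := by linarith
      have hnn : (0 : ℝ) ≤ (1 - lam) * α := mul_nonneg (by linarith) hα0.le
      have h1 : (1 - lam) * α * i / ((m : ℝ) - i + 1) ≤ (1 - lam) * α * i :=
        div_le_self (mul_nonneg hnn (Nat.cast_nonneg i)) hden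
      have h2 : (1 - lam) * α * (i : ℝ) ≤ (1 - lam) * α * m :=
        mul_le_mul_of_nonneg_left hi' hnn
      calc (1 - lam) * α * i / ((m : ℝ) - i + 1) ≤ (1 - lam) * α * i := h1
        _ ≤ (1 - lam) * α * m := h2
        _ = (1 - lam) * α * (m : ℕ) / ((m : ℝ) - (m : ℕ) + 1) := by rw [hmm, div_one]
    · apply le_min _ hl0.le
      rw [hmm, div_one]
      exact mul_nonneg (mul_nonneg (by linarith) hα0.le) (Nat.cast_nonneg m)
    · exact (min_le_right _ _).trans hl1.le
end

section
/- Let R₀ be a non-increasing multiple testing procedure with FWER controlled at level α₀, i.e. P(R₀ ∩ H₀ ≠ ∅) ≤ α₀. Let R be the adaptive step-up procedure with data-dependent threshold collection Δ(i) = α₁·β(i)/(m − |R₀|), where β is a shape function of the form β(r) = ∫₀^r u dν(u) for some probability measure ν on (0,∞), and the p-values have arbitrary (unspecified) dependence with true null p-values stochastically lower bounded by uniform. Then FDR(R) ≤ α₀ + α₁. -/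
open MeasureTheory ENNReal


lemma tele_real (k : ℕ) (hk : 1 ≤ k) : ∀ n, k ≤ n →
    (1 : ℝ)/k = (∑ j ∈ Finset.Ico k n, (1:ℝ)/((j:ℝ)*((j:ℝ)+1))) + 1/n := by
  intro n hn
  induction n, hn using Nat.le_induction with
  | base => simp
  | succ n hn ih =>
    rw [Finset.sum_Ico_succ_top hn, ih]
    have hn1 : (1:ℝ) ≤ (n:ℝ) := by exact_mod_cast hk.trans hn
    have h0 : (n:ℝ) ≠ 0 := by positivity
    have h1 : (n:ℝ) + 1 ≠ 0 := by positivity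
    push_cast
    field_simp
    ring

lemma intOnId (ν : Measure ℝ) [IsFiniteMeasure ν] (r : ℝ) (hr : 0 ≤ r) :
    IntegrableOn (fun u : ℝ => u) (Set.Ioc (0:ℝ) r) ν := by
  apply Measure.integrableOn_of_bounded (M := r) (measure_ne_top _ _)
    aestronglyMeasurable_id
  refine (ae_restrict_iff' measurableSet_Ioc).2 (ae_of_all _ ?_)
  intro x hx
  show ‖x‖ ≤ r
  rw [Real.norm_eq_abs, abs_of_pos hx.1]
  exact hx.2

lemma beta_nonneg (ν : Measure ℝ) (β : ℕ → ℝ)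
    (hβ : ∀ r : ℕ, β r = ∫ u in Set.Ioc (0 : ℝ) (r : ℝ), u ∂ν) (r : ℕ) : 0 ≤ β r := by
  rw [hβ]
  apply setIntegral_nonneg measurableSet_Ioc
  intro x hx; exact hx.1.le

lemma beta_mono (ν : Measure ℝ) [IsFiniteMeasure ν] (β : ℕ → ℝ)
    (hβ : ∀ r : ℕ, β r = ∫ u in Set.Ioc (0 : ℝ) (r : ℝ), u ∂ν) {k j : ℕ} (hkj : k ≤ j) :
    β k ≤ β j := by
  rw [hβ, hβ]
  apply setIntegral_mono_set (intOnId ν j (by positivity))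
  · refine (ae_restrict_iff' measurableSet_Ioc).2 (ae_of_all _ fun x hx => hx.1.le)
  · exact ae_of_all _ (Set.Ioc_subset_Ioc_right (by exact_mod_cast hkj))

lemma key_sum (ν : Measure ℝ) [IsProbabilityMeasure ν] (β : ℕ → ℝ)
    (hβ : ∀ r : ℕ, β r = ∫ u in Set.Ioc (0 : ℝ) (r : ℝ), u ∂ν) :
    ∀ n, 1 ≤ n → (∑ j ∈ Finset.Ico 1 n, β j/((j:ℝ)*((j:ℝ)+1))) + β n/n ≤ 1 := by
  have main : ∀ n, 1 ≤ n → (∑ j ∈ Finset.Ico 1 n, β j/((j:ℝ)*((j:ℝ)+1))) + β n/n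
      ≤ (ν (Set.Ioc (0:ℝ) (n:ℝ))).toReal := by
    intro n hn
    induction n, hn using Nat.le_induction with
    | base =>
      simp only [Finset.Ico_self, Finset.sum_empty, zero_add, Nat.cast_one, div_one]
      rw [hβ]
      calc ∫ u in Set.Ioc (0:ℝ) ((1:ℕ):ℝ), u ∂ν
          ≤ ∫ _ in Set.Ioc (0:ℝ) ((1:ℕ):ℝ), (1:ℝ) ∂ν := by
            apply setIntegral_mono_on (intOnId ν _ (by norm_num))
              integrableOn_const measurableSet_Ioc
            intro x hx; exact_mod_cast hx.2
        _ = (ν (Set.Ioc (0:ℝ) ((1:ℕ):ℝ))).toReal := by simp [Measure.real]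
        _ = (ν (Set.Ioc (0:ℝ) ((1:ℝ)))).toReal := by norm_num
    | succ n hn ih =>
      have hn0 : (0:ℝ) < n := by exact_mod_cast hn
      have hpiece : β (n+1) - β n = ∫ u in Set.Ioc (n:ℝ) ((n:ℝ)+1), u ∂ν := by
        rw [hβ, hβ]
        have hsplit : Set.Ioc (0:ℝ) ((n:ℝ)+1) = Set.Ioc (0:ℝ) (n:ℝ) ∪ Set.Ioc (n:ℝ) ((n:ℝ)+1) :=
          (Set.Ioc_union_Ioc_eq_Ioc (by positivity) (by linarith)).symm
        have hdisj : Disjoint (Set.Ioc (0:ℝ) (n:ℝ)) (Set.Ioc (n:ℝ) ((n:ℝ)+1)) :=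
          (Set.Ioc_disjoint_Ioc_of_le le_rfl)
        have hint1 := intOnId ν n (by positivity)
        have hint2 : IntegrableOn (fun u : ℝ => u) (Set.Ioc (n:ℝ) ((n:ℝ)+1)) ν :=
          (intOnId ν ((n:ℝ)+1) (by positivity)).mono_set (Set.Ioc_subset_Ioc_left hn0.le)
        push_cast
        rw [hsplit, setIntegral_union hdisj measurableSet_Ioc hint1 hint2]
        ring
      have hbd : β (n+1) - β n ≤ ((n:ℝ)+1) * (ν (Set.Ioc (n:ℝ) ((n:ℝ)+1))).toReal := by
        rw [hpiece]
        calc ∫ u in Set.Ioc (n:ℝ) ((n:ℝ)+1), u ∂ν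
            ≤ ∫ _ in Set.Ioc (n:ℝ) ((n:ℝ)+1), ((n:ℝ)+1) ∂ν := by
              apply setIntegral_mono_on
                ((intOnId ν ((n:ℝ)+1) (by positivity)).mono_set
                  (Set.Ioc_subset_Ioc_left hn0.le))
                integrableOn_const measurableSet_Ioc
              intro x hx; exact hx.2
          _ = (ν (Set.Ioc (n:ℝ) ((n:ℝ)+1))).toReal * ((n:ℝ)+1) := by simp [Measure.real]
          _ = _ := by ring
      have hmeas_add : (ν (Set.Ioc (0:ℝ) ((n:ℝ)+1))).toReal
          = (ν (Set.Ioc (0:ℝ) (n:ℝ))).toReal + (ν (Set.Ioc (n:ℝ) ((n:ℝ)+1))).toReal := by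
        rw [← ENNReal.toReal_add (measure_ne_top _ _) (measure_ne_top _ _),
          ← measure_union (Set.Ioc_disjoint_Ioc_of_le le_rfl) measurableSet_Ioc,
          Set.Ioc_union_Ioc_eq_Ioc (by positivity) (by linarith)]
      rw [Finset.sum_Ico_succ_top hn]
      push_cast
      rw [hmeas_add]
      have halg : (∑ j ∈ Finset.Ico 1 n, β j/((j:ℝ)*((j:ℝ)+1)))
          + β n / ((n:ℝ)*((n:ℝ)+1)) + β (n+1) / ((n:ℝ)+1)
          = ((∑ j ∈ Finset.Ico 1 n, β j/((j:ℝ)*((j:ℝ)+1))) + β n / n)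
            + (β (n+1) - β n) / ((n:ℝ)+1) := by
        have h0 : (n:ℝ) ≠ 0 := hn0.ne'
        have h1 : (n:ℝ) + 1 ≠ 0 := by positivity
        field_simp
        ring
      have hdiv : (β (n+1) - β n) / ((n:ℝ)+1) ≤ (ν (Set.Ioc (n:ℝ) ((n:ℝ)+1))).toReal := by
        rw [div_le_iff₀ (by positivity)]
        linarith [hbd]
      push_cast at halg ih ⊢
      linarith [ih, hdiv, halg.le, halg.ge]
  intro n hn
  refine (main n hn).trans ?_
  have : ν (Set.Ioc (0:ℝ) (n:ℝ)) ≤ 1 := prob_le_one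
  calc (ν (Set.Ioc (0:ℝ) (n:ℝ))).toReal ≤ (1:ℝ≥0∞).toReal :=
      ENNReal.toReal_mono (by norm_num) this
    _ = 1 := by simp


/-- Theorem (two-stage procedure with FWER-controlled first stage, arbitrary
dependence): if `R₀` is non-increasing with FWER ≤ α₀ and `R` is a non-increasing
procedure self-consistent w.r.t. the data-dependent threshold collection
`Δ(i) = α₁ β(i)/(m - |R₀|)`, where `β(r) = ∫₀^r u dν(u)` for a probability
measure `ν` on `(0,∞)` (and `R` rejects everything when `R₀` does), then
`FDR(R) ≤ α₀ + α₁`. -/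
theorem stmt14 {Ω : Type*} [MeasurableSpace Ω] (μ : Measure Ω) [IsProbabilityMeasure μ]
    (m : ℕ) (hm : 1 ≤ m) (p : Ω → Fin m → ℝ) (hp : Measurable p)
    (H₀ : Finset (Fin m))
    (hnull : ∀ h ∈ H₀, ∀ t ∈ Set.Icc (0 : ℝ) 1,
      μ {ω | p ω h ≤ t} ≤ ENNReal.ofReal t)
    (ν : Measure ℝ) [IsProbabilityMeasure ν] (hν : ν (Set.Ioi (0 : ℝ))ᶜ = 0)
    (β : ℕ → ℝ) (hβ : ∀ r : ℕ, β r = ∫ u in Set.Ioc (0 : ℝ) (r : ℝ), u ∂ν)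
    (α₀ α₁ : ℝ) (hα₀ : α₀ ∈ Set.Ioo (0 : ℝ) 1) (hα₁ : α₁ ∈ Set.Ioo (0 : ℝ) 1)
    (R₀ R : (Fin m → ℝ) → Finset (Fin m))
    (hR₀meas : ∀ s : Finset (Fin m), MeasurableSet {x : Fin m → ℝ | R₀ x = s})
    (hRmeas : ∀ s : Finset (Fin m), MeasurableSet {x : Fin m → ℝ | R x = s})
    (hR₀ni : ∀ x y : Fin m → ℝ, x ≤ y → (R₀ y).card ≤ (R₀ x).card)
    (hFWER : μ {ω | (R₀ (p ω) ∩ H₀).Nonempty} ≤ ENNReal.ofReal α₀)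
    (hRni : ∀ x y : Fin m → ℝ, x ≤ y → (R y).card ≤ (R x).card)
    (hsc : ∀ᵐ ω ∂μ, ∀ h ∈ R (p ω),
      (R₀ (p ω)).card = m ∨
        p ω h ≤ α₁ * β ((R (p ω)).card) / ((m : ℝ) - ((R₀ (p ω)).card : ℝ)))
    (hfull : ∀ x : Fin m → ℝ, (R₀ x).card = m → R x = Finset.univ) :
    ∫⁻ ω, ENNReal.ofReal
        (((R (p ω) ∩ H₀).card : ℝ) / ((R (p ω)).card : ℝ)
          * (if 0 < (R (p ω)).card then 1 else 0)) ∂μ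
      ≤ ENNReal.ofReal (α₀ + α₁) := by
  classical
  set A : Set Ω := {ω | (R₀ (p ω) ∩ H₀).Nonempty} with hA
  set c : ℝ := α₁ / (H₀.card : ℝ) with hc
  have hc0 : 0 ≤ c := div_nonneg hα₁.1.le (Nat.cast_nonneg _)
  have hβ0 : ∀ r, 0 ≤ β r := beta_nonneg ν β hβ
  -- measurability
  have hAm : MeasurableSet A := by
    have hrw : A = p ⁻¹' (⋃ (s : Finset (Fin m)) (_ : (s ∩ H₀).Nonempty),
        {x : Fin m → ℝ | R₀ x = s}) := by
      ext ω
      simp only [hA, Set.mem_preimage, Set.mem_iUnion, Set.mem_setOf_eq]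
      constructor
      · intro h; exact ⟨R₀ (p ω), h, rfl⟩
      · rintro ⟨s, hs, heq⟩; rw [heq]; exact hs
    rw [hrw]
    exact hp (MeasurableSet.iUnion fun s => MeasurableSet.iUnion fun _ => hR₀meas s)
  have hVm : ∀ k : ℕ, MeasurableSet {ω | (R (p ω)).card = k} := by
    intro k
    have hrw : {ω | (R (p ω)).card = k} = p ⁻¹' (⋃ (s : Finset (Fin m)) (_ : s.card = k),
        {x : Fin m → ℝ | R x = s}) := by
      ext ω
      simp only [Set.mem_preimage, Set.mem_iUnion, Set.mem_setOf_eq]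
      constructor
      · intro h; exact ⟨R (p ω), h, rfl⟩
      · rintro ⟨s, hs, heq⟩; rw [heq]; exact hs
    rw [hrw]
    exact hp (MeasurableSet.iUnion fun s => MeasurableSet.iUnion fun _ => hRmeas s)
  have hPmeas : ∀ (h : Fin m) (t : ℝ), MeasurableSet {ω | p ω h ≤ t} := fun h t =>
    measurableSet_Iic.preimage ((measurable_pi_apply h).comp hp)
  set E : Fin m → ℕ → Set Ω := fun h k =>
    Aᶜ ∩ {ω | (R (p ω)).card = k} ∩ {ω | p ω h ≤ c * β k} with hE
  have hEm : ∀ h k, MeasurableSet (E h k) := fun h k =>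
    (hAm.compl.inter (hVm k)).inter (hPmeas h (c * β k))
  set G : Ω → ℝ≥0∞ := fun ω => A.indicator (fun _ => (1:ℝ≥0∞)) ω
    + ∑ h ∈ H₀, ∑ k ∈ Finset.Icc 1 m,
        (E h k).indicator (fun _ => ENNReal.ofReal (1/(k:ℝ))) ω with hG
  -- pointwise a.e. bound
  have hpt : ∀ᵐ ω ∂μ, ENNReal.ofReal
      (((R (p ω) ∩ H₀).card : ℝ) / ((R (p ω)).card : ℝ)
        * (if 0 < (R (p ω)).card then 1 else 0)) ≤ G ω := by
    filter_upwards [hsc] with ω hω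
    by_cases hAω : ω ∈ A
    · have h1 : ENNReal.ofReal
          (((R (p ω) ∩ H₀).card : ℝ) / ((R (p ω)).card : ℝ)
            * (if 0 < (R (p ω)).card then 1 else 0)) ≤ 1 := by
        apply ENNReal.ofReal_le_one.2
        by_cases hk : 0 < (R (p ω)).card
        · rw [if_pos hk, mul_one]
          apply div_le_one_of_le₀
          · exact_mod_cast Finset.card_le_card (Finset.inter_subset_left)
          · positivity
        · rw [if_neg hk, mul_zero]; norm_num
      refine le_trans h1 (le_trans ?_ le_self_add)
      rw [Set.indicator_of_mem hAω (fun _ => (1:ℝ≥0∞))]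
    · by_cases hk0 : 0 < (R (p ω)).card
      · set k := (R (p ω)).card with hkdef
        have hkm : k ≤ m := by
          have := Finset.card_le_univ (R (p ω))
          simpa [Finset.card_univ] using this
        have hmem : ∀ h ∈ R (p ω) ∩ H₀, ω ∈ E h k := by
          intro h hh
          obtain ⟨hhR, hhH⟩ := Finset.mem_inter.1 hh
          refine ⟨⟨hAω, rfl⟩, ?_⟩
          rcases hω h hhR with hcard | hle
          · exfalso
            have : R₀ (p ω) = Finset.univ := by
              apply Finset.eq_univ_of_card
              simpa [Fintype.card_fin] using hcard
            exact hAω (by simp [hA, this]; exact ⟨h, hhH⟩)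
          · refine hle.trans ?_
            have hm₀pos : 0 < H₀.card := Finset.card_pos.2 ⟨h, hhH⟩
            have hsub : R₀ (p ω) ⊆ H₀ᶜ := by
              intro a ha
              rw [Finset.mem_compl]
              intro haH
              exact hAω ⟨a, Finset.mem_inter.2 ⟨ha, haH⟩⟩
            have hm₀le : H₀.card ≤ m := by
              have := Finset.card_le_univ H₀
              simpa [Finset.card_univ] using this
            have hcard' : ((R₀ (p ω)).card : ℝ) ≤ (m : ℝ) - (H₀.card : ℝ) := by
              have h1 : (R₀ (p ω)).card ≤ m - H₀.card := by
                have := Finset.card_le_card hsub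
                simpa [Finset.card_compl, Fintype.card_fin] using this
              have h2 : ((m - H₀.card : ℕ) : ℝ) = (m : ℝ) - (H₀.card : ℝ) :=
                Nat.cast_sub hm₀le
              calc ((R₀ (p ω)).card : ℝ) ≤ ((m - H₀.card : ℕ) : ℝ) := by exact_mod_cast h1
                _ = _ := h2
            have hnum : 0 ≤ α₁ * β k := mul_nonneg hα₁.1.le (hβ0 k)
            have hden : (0:ℝ) < (H₀.card : ℝ) := by exact_mod_cast hm₀pos
            have : α₁ * β k / ((m : ℝ) - ((R₀ (p ω)).card : ℝ)) ≤ α₁ * β k / (H₀.card : ℝ) := by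
              apply div_le_div_of_nonneg_left hnum hden
              linarith
            calc α₁ * β k / ((m : ℝ) - ((R₀ (p ω)).card : ℝ))
                ≤ α₁ * β k / (H₀.card : ℝ) := this
              _ = c * β k := by rw [hc]; ring
        have hchain : ENNReal.ofReal
            (((R (p ω) ∩ H₀).card : ℝ) / (k : ℝ) * (if 0 < k then 1 else 0))
            ≤ ∑ h ∈ H₀, (E h k).indicator (fun _ => ENNReal.ofReal (1/(k:ℝ))) ω := by
          rw [if_pos hk0, mul_one]
          have e1 : ENNReal.ofReal (((R (p ω) ∩ H₀).card : ℝ) / (k : ℝ))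
              = ((R (p ω) ∩ H₀).card : ℝ≥0∞) * ENNReal.ofReal (1/(k:ℝ)) := by
            rw [div_eq_mul_one_div, ENNReal.ofReal_mul (Nat.cast_nonneg _),
              ENNReal.ofReal_natCast]
          rw [e1]
          calc ((R (p ω) ∩ H₀).card : ℝ≥0∞) * ENNReal.ofReal (1/(k:ℝ))
              = ∑ _h ∈ R (p ω) ∩ H₀, ENNReal.ofReal (1/(k:ℝ)) := by
                rw [Finset.sum_const, nsmul_eq_mul]
            _ = ∑ h ∈ R (p ω) ∩ H₀,
                (E h k).indicator (fun _ => ENNReal.ofReal (1/(k:ℝ))) ω := by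
                apply Finset.sum_congr rfl
                intro h hh
                rw [Set.indicator_of_mem (hmem h hh)]
            _ ≤ ∑ h ∈ H₀, (E h k).indicator (fun _ => ENNReal.ofReal (1/(k:ℝ))) ω := by
                apply Finset.sum_le_sum_of_subset
                intro h hh
                exact (Finset.mem_inter.1 hh).2
        have hstep : (∑ h ∈ H₀, (E h k).indicator (fun _ => ENNReal.ofReal (1/(k:ℝ))) ω)
            ≤ ∑ h ∈ H₀, ∑ k' ∈ Finset.Icc 1 m,
              (E h k').indicator (fun _ => ENNReal.ofReal (1/(k':ℝ))) ω := by
          refine Finset.sum_le_sum fun h _ => ?_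
          exact Finset.single_le_sum
            (f := fun k' => (E h k').indicator (fun _ => ENNReal.ofReal (1/(k':ℝ))) ω)
            (fun k' _ => zero_le) (Finset.mem_Icc.2 ⟨hk0, hkm⟩)
        exact le_trans hchain (le_trans hstep le_add_self)
      · rw [if_neg hk0, mul_zero, ENNReal.ofReal_zero]
        exact zero_le
  -- integral of G
  have hGint : ∫⁻ ω, G ω ∂μ = μ A + ∑ h ∈ H₀, ∑ k ∈ Finset.Icc 1 m,
      ENNReal.ofReal (1/(k:ℝ)) * μ (E h k) := by
    rw [hG]
    rw [lintegral_add_left (measurable_const.indicator hAm)]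
    rw [lintegral_indicator_const hAm, one_mul]
    congr 1
    rw [lintegral_finset_sum _ (fun h _ => Finset.measurable_sum _
      (fun k _ => measurable_const.indicator (hEm h k)))]
    apply Finset.sum_congr rfl
    intro h _
    rw [lintegral_finset_sum _ (fun k _ => measurable_const.indicator (hEm h k))]
    apply Finset.sum_congr rfl
    intro k _
    rw [lintegral_indicator_const (hEm h k)]
  -- probability bound on null p-values
  have hPb : ∀ h ∈ H₀, ∀ t : ℝ, 0 ≤ t → μ {ω | p ω h ≤ t} ≤ ENNReal.ofReal t := by
    intro h hh t ht
    rcases le_or_gt t 1 with h1 | h1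
    · exact hnull h hh t ⟨ht, h1⟩
    · refine le_trans prob_le_one ?_
      rw [← ENNReal.ofReal_one]
      exact ENNReal.ofReal_le_ofReal h1.le
  -- per-hypothesis bound
  have hperh : ∀ h ∈ H₀, ∑ k ∈ Finset.Icc 1 m,
      ENNReal.ofReal (1/(k:ℝ)) * μ (E h k) ≤ ENNReal.ofReal c := by
    intro h hh
    have hUb : ∀ j, 1 ≤ j → j ≤ m →
        ∑ k ∈ Finset.Icc 1 j, μ (E h k) ≤ ENNReal.ofReal (c * β j) := by
      intro j hj1 hjm
      have hdisj : (↑(Finset.Icc 1 j) : Set ℕ).PairwiseDisjoint (E h) := by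
        intro k₁ _ k₂ _ hne
        apply Set.disjoint_left.2
        rintro ω ⟨⟨_, hk₁⟩, _⟩ ⟨⟨_, hk₂⟩, _⟩
        exact hne (hk₁.symm.trans hk₂)
      rw [← measure_biUnion_finset hdisj (fun k _ => hEm h k)]
      have hsub : (⋃ k ∈ Finset.Icc 1 j, E h k) ⊆ {ω | p ω h ≤ c * β j} := by
        intro ω hω
        simp only [Set.mem_iUnion] at hω
        obtain ⟨k, hk, hωk⟩ := hω
        obtain ⟨⟨_, _⟩, hple⟩ := hωk
        simp only [Set.mem_setOf_eq] at hple ⊢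
        exact le_trans hple
          (mul_le_mul_of_nonneg_left (beta_mono ν β hβ (Finset.mem_Icc.1 hk).2) hc0)
      exact le_trans (measure_mono hsub) (hPb h hh _ (mul_nonneg hc0 (hβ0 j)))
    have htel : ∀ k ∈ Finset.Icc 1 m, ENNReal.ofReal (1/(k:ℝ))
        = (∑ j ∈ Finset.Ico k m, ENNReal.ofReal (1/((j:ℝ)*((j:ℝ)+1))))
          + ENNReal.ofReal (1/(m:ℝ)) := by
      intro k hk
      obtain ⟨hk1, hkm⟩ := Finset.mem_Icc.1 hk
      rw [← ENNReal.ofReal_sum_of_nonneg (fun j _ => by positivity),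
        ← ENNReal.ofReal_add (Finset.sum_nonneg (fun j _ => by positivity)) (by positivity)]
      exact congrArg _ (tele_real k hk1 m hkm)
    have hswap : (∑ k ∈ Finset.Icc 1 m, ∑ j ∈ Finset.Ico k m,
          ENNReal.ofReal (1/((j:ℝ)*((j:ℝ)+1))) * μ (E h k))
        = ∑ j ∈ Finset.Ico 1 m, ∑ k ∈ Finset.Icc 1 j,
          ENNReal.ofReal (1/((j:ℝ)*((j:ℝ)+1))) * μ (E h k) := by
      apply Finset.sum_comm'
      intro k j
      simp only [Finset.mem_Icc, Finset.mem_Ico]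
      omega
    calc ∑ k ∈ Finset.Icc 1 m, ENNReal.ofReal (1/(k:ℝ)) * μ (E h k)
        = ∑ k ∈ Finset.Icc 1 m, ((∑ j ∈ Finset.Ico k m,
            ENNReal.ofReal (1/((j:ℝ)*((j:ℝ)+1))) * μ (E h k))
          + ENNReal.ofReal (1/(m:ℝ)) * μ (E h k)) := by
          apply Finset.sum_congr rfl
          intro k hk
          rw [htel k hk, add_mul, Finset.sum_mul]
      _ = (∑ k ∈ Finset.Icc 1 m, ∑ j ∈ Finset.Ico k m,
            ENNReal.ofReal (1/((j:ℝ)*((j:ℝ)+1))) * μ (E h k))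
          + ∑ k ∈ Finset.Icc 1 m, ENNReal.ofReal (1/(m:ℝ)) * μ (E h k) :=
          Finset.sum_add_distrib
      _ = (∑ j ∈ Finset.Ico 1 m, ENNReal.ofReal (1/((j:ℝ)*((j:ℝ)+1)))
            * ∑ k ∈ Finset.Icc 1 j, μ (E h k))
          + ENNReal.ofReal (1/(m:ℝ)) * ∑ k ∈ Finset.Icc 1 m, μ (E h k) := by
          rw [hswap, ← Finset.mul_sum]
          congr 1
          apply Finset.sum_congr rfl
          intro j _
          rw [Finset.mul_sum]
      _ ≤ (∑ j ∈ Finset.Ico 1 m, ENNReal.ofReal (1/((j:ℝ)*((j:ℝ)+1)))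
            * ENNReal.ofReal (c * β j))
          + ENNReal.ofReal (1/(m:ℝ)) * ENNReal.ofReal (c * β m) := by
          apply add_le_add
          · apply Finset.sum_le_sum
            intro j hj
            obtain ⟨hj1, hjm⟩ := Finset.mem_Ico.1 hj
            exact mul_le_mul_right (hUb j hj1 hjm.le) _
          · exact mul_le_mul_right (hUb m hm le_rfl) _
      _ = ENNReal.ofReal ((∑ j ∈ Finset.Ico 1 m, (1/((j:ℝ)*((j:ℝ)+1))) * (c * β j))
          + (1/(m:ℝ)) * (c * β m)) := by
          rw [ENNReal.ofReal_add (Finset.sum_nonneg (fun j _ =>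
            mul_nonneg (by positivity) (mul_nonneg hc0 (hβ0 j))))
            (mul_nonneg (by positivity) (mul_nonneg hc0 (hβ0 m))),
            ENNReal.ofReal_sum_of_nonneg (fun j _ =>
            mul_nonneg (by positivity) (mul_nonneg hc0 (hβ0 j)))]
          congr 1
          · exact Finset.sum_congr rfl fun j _ => (ENNReal.ofReal_mul (by positivity)).symm
          · exact (ENNReal.ofReal_mul (by positivity)).symm
      _ ≤ ENNReal.ofReal c := by
          apply ENNReal.ofReal_le_ofReal
          have hks := key_sum ν β hβ m hm
          have : (∑ j ∈ Finset.Ico 1 m, (1/((j:ℝ)*((j:ℝ)+1))) * (c * β j))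
              + (1/(m:ℝ)) * (c * β m)
              = c * ((∑ j ∈ Finset.Ico 1 m, β j/((j:ℝ)*((j:ℝ)+1))) + β m/(m:ℝ)) := by
            rw [mul_add, Finset.mul_sum]
            congr 1
            · apply Finset.sum_congr rfl
              intro j _; ring
            · ring
          rw [this]
          calc c * ((∑ j ∈ Finset.Ico 1 m, β j/((j:ℝ)*((j:ℝ)+1))) + β m/(m:ℝ))
              ≤ c * 1 := mul_le_mul_of_nonneg_left hks hc0
            _ = c := mul_one c
  -- assemble
  calc ∫⁻ ω, ENNReal.ofReal
        (((R (p ω) ∩ H₀).card : ℝ) / ((R (p ω)).card : ℝ)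
          * (if 0 < (R (p ω)).card then 1 else 0)) ∂μ
      ≤ ∫⁻ ω, G ω ∂μ := lintegral_mono_ae hpt
    _ = μ A + ∑ h ∈ H₀, ∑ k ∈ Finset.Icc 1 m,
        ENNReal.ofReal (1/(k:ℝ)) * μ (E h k) := hGint
    _ ≤ ENNReal.ofReal α₀ + ∑ h ∈ H₀, ENNReal.ofReal c :=
        add_le_add hFWER (Finset.sum_le_sum hperh)
    _ ≤ ENNReal.ofReal α₀ + ENNReal.ofReal α₁ := by
        apply add_le_add_right
        rw [Finset.sum_const, nsmul_eq_mul]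
        rcases Nat.eq_zero_or_pos H₀.card with h0 | hpos
        · rw [h0]; simp
        · rw [← ENNReal.ofReal_natCast, ← ENNReal.ofReal_mul (Nat.cast_nonneg _)]
          apply ENNReal.ofReal_le_ofReal
          have : (H₀.card : ℝ) ≠ 0 := by positivity
          rw [hc]
          field_simp
          exact le_rfl
    _ = ENNReal.ofReal (α₀ + α₁) := (ENNReal.ofReal_add hα₀.1.le hα₁.1.le).symm
end
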